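/- arXiv:1912.04607 — 4 statements merged into one kernel-verified Lean document; each statement's English description precedes it below -/
import Mathlib

section
/- (The heterogeneous Guo–Romano procedure rejects at least as much as Guo–Romano under super-uniformity.) Let α, ζ ∈ (0,1), A ⊆ [0,1], and F_1,…,F_m : [0,1] → [0,1] be nondecreasing functions with F_i(t) ≤ t for all i and t ∈ [0,1]. For 1 ≤ j ≤ m and t ∈ [0,1], let F̃_j(t) = 1 − ( ∏_{j'=1}^{j} (1 − (F(t))_{(j')}) )^{1/j}, where (F(t))_{(1)} ≥ … ≥ (F(t))_{(m)} are the values F_1(t),…,F_m(t) sorted nonincreasingly. For ℓ ∈ {1,…,m} define ξ^GR_ℓ(t) = P(Bin[m(ℓ), t] ≥ ⌊αℓ⌋ + 1) and ξ^HGR_ℓ(t) = P(Bin[m(ℓ), F̃_{m(ℓ)}(t)] ≥ ⌊αℓ⌋ + 1). Let τ^GR_ℓ = max{t ∈ [0,1] : ξ^GR_ℓ(t) ≤ ζ}, and assume that for each ℓ the set {t ∈ A : ξ^HGR_ℓ(t) ≤ ζ}, if nonempty, admits a greatest element τ^HGR_ℓ (τ^HGR_ℓ = 0 if empty). Then for any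 p-values p_1,…,p_m all belonging to A, the step-down rejection set with critical values (τ^GR_ℓ) is contained in the step-down rejection set with critical values (τ^HGR_ℓ). -/
open MeasureTheory ProbabilityTheory Finset

namespace FDX

/-- `m(ℓ) = m − ℓ + ⌊α·ℓ⌋ + 1`. -/
noncomputable def mfun (α : ℝ) (m ℓ : ℕ) : ℕ := m - ℓ + ⌊α * ℓ⌋₊ + 1

/-- `k(ℓ) = ⌊α·ℓ⌋ + 1`. -/
noncomputable def kfun (α : ℝ) (ℓ : ℕ) : ℕ := ⌊α * ℓ⌋₊ + 1

/-- Number of p-values that are `≤ t`. -/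
noncomputable def countLe {m : ℕ} (p : Fin m → ℝ) (t : ℝ) : ℕ :=
  (Finset.univ.filter (fun i => p i ≤ t)).card

/-- The step-down index `ℓ̂ = max{ℓ ∈ {0,…,m} : ∀ ℓ' ≤ ℓ, p_{σ(ℓ')} ≤ τ_{ℓ'}}`, expressed
via the equivalent condition that for each `1 ≤ ℓ' ≤ ℓ` at least `ℓ'` p-values are `≤ τ_{ℓ'}`. -/
noncomputable def sdIndex {m : ℕ} (p : Fin m → ℝ) (τ : ℕ → ℝ) : ℕ :=
  @Nat.findGreatest (fun ℓ => ∀ ℓ', 1 ≤ ℓ' → ℓ' ≤ ℓ → ℓ' ≤ countLe p (τ ℓ'))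
    (Classical.decPred _) m

/-- The step-down rejection set: `R = {i : p_i ≤ τ_{ℓ̂}}` if `ℓ̂ ≥ 1`, and `R = ∅` if `ℓ̂ = 0`. -/
noncomputable def sdReject {m : ℕ} (p : Fin m → ℝ) (τ : ℕ → ℝ) : Finset (Fin m) :=
  if sdIndex p τ = 0 then ∅ else Finset.univ.filter (fun i => p i ≤ τ (sdIndex p τ))

/-- The false discovery proportion `|R ∩ H0| / max(|R|, 1)`. -/
noncomputable def FDP {m : ℕ} (H0 R : Finset (Fin m)) : ℝ := ((R ∩ H0).card : ℝ) / max (R.card : ℝ) 1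

/-- The binomial tail `P(Bin[n,t] ≥ k)`. -/
noncomputable def binTail (n : ℕ) (t : ℝ) (k : ℕ) : ℝ :=
  ∑ j ∈ Finset.Icc k n, (n.choose j : ℝ) * t ^ j * (1 - t) ^ (n - j)

/-- The Poisson-binomial tail `P(PBin[(π_i)_{i ∈ s}] ≥ k)`. -/
noncomputable def pbinTail {ι : Type*} [DecidableEq ι] (s : Finset ι) (π : ι → ℝ) (k : ℕ) : ℝ :=
  ∑ S ∈ s.powerset.filter (fun S => k ≤ S.card), (∏ i ∈ S, π i) * ∏ i ∈ s \ S, (1 - π i)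

/-- The nonincreasing rearrangement: `descSort v j` is the `(j+1)`-th largest value of `v`. -/
noncomputable def descSort {m : ℕ} (v : Fin m → ℝ) : Fin m → ℝ :=
  fun j => v (Tuple.sort (fun i => -v i) j)

/-- The geometric-average transform `F̃_j(v) = 1 − (∏_{j'=1}^{j} (1 − v_{(j')}))^{1/j}`. -/
noncomputable def Ftil {m : ℕ} (v : Fin m → ℝ) (j : ℕ) : ℝ :=
  1 - (∏ j' ∈ Finset.univ.filter (fun j' : Fin m => (j' : ℕ) < j), (1 - descSort v j')) ^ ((1 : ℝ) / j)

end FDX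

namespace StmtNine
open Finset Polynomial FDX

lemma binTail_nonneg (n k : ℕ) {t : ℝ} (ht : t ∈ Set.Icc (0:ℝ) 1) : 0 ≤ binTail n t k := by
  refine Finset.sum_nonneg fun j _ => ?_
  have h1 := ht.1; have h2 := ht.2
  have : (0:ℝ) ≤ 1 - t := by linarith
  positivity

lemma binTail_anti_k (n : ℕ) {k k' : ℕ} (h : k ≤ k') {t : ℝ} (ht : t ∈ Set.Icc (0:ℝ) 1) :
    binTail n t k' ≤ binTail n t k := by
  refine Finset.sum_le_sum_of_subset_of_nonneg (Finset.Icc_subset_Icc_left h) fun j _ _ => ?_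
  have h1 := ht.1; have h2 := ht.2
  have : (0:ℝ) ≤ 1 - t := by linarith
  positivity

lemma binTail_pascal (n k : ℕ) (t : ℝ) :
    binTail (n+1) t (k+1) = t * binTail n t k + (1 - t) * binTail n t (k+1) := by
  rcases le_or_gt k n with hk | hk
  · have hre : Finset.Icc (k+1) (n+1)
        = Finset.map (addRightEmbedding 1) (Finset.Icc k n) :=
      (Finset.map_add_right_Icc k n 1).symm
    rw [binTail, hre, Finset.sum_map]
    simp only [addRightEmbedding_apply]
    have hsplit : ∀ i ∈ Finset.Icc k n,
        ((n+1).choose (i+1) : ℝ) * t ^ (i+1) * (1 - t) ^ (n+1-(i+1))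
          = t * ((n.choose i : ℝ) * t ^ i * (1 - t) ^ (n - i))
            + (1 - t) * ((n.choose (i+1) : ℝ) * t ^ (i+1) * (1 - t) ^ (n - (i+1))) := by
      intro i hi
      simp only [Finset.mem_Icc] at hi
      have hcast : ((n+1).choose (i+1) : ℝ) = (n.choose i : ℝ) + (n.choose (i+1) : ℝ) := by
        rw [Nat.choose_succ_succ]; push_cast; ring
      rcases lt_or_eq_of_le hi.2 with hlt | heq
      · have h1 : n + 1 - (i + 1) = n - i := by omega
        have h2 : n - i = (n - (i+1)) + 1 := by omega
        rw [hcast, h1, h2]; ring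
      · have h0 : n.choose (i+1) = 0 := Nat.choose_eq_zero_of_lt (by omega)
        have h1 : n + 1 - (i + 1) = n - i := by omega
        rw [hcast, h0, h1]; push_cast; ring
    rw [Finset.sum_congr rfl hsplit, Finset.sum_add_distrib, ← Finset.mul_sum, ← Finset.mul_sum]
    have e2 : ∑ i ∈ Finset.Icc k n, ((n.choose (i+1) : ℝ) * t ^ (i+1) * (1 - t) ^ (n - (i+1)))
        = binTail n t (k+1) := by
      have : ∑ i ∈ Finset.Icc k n, ((n.choose (i+1) : ℝ) * t ^ (i+1) * (1 - t) ^ (n - (i+1)))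
          = ∑ j ∈ Finset.Icc (k+1) (n+1), ((n.choose j : ℝ) * t ^ j * (1 - t) ^ (n - j)) := by
        rw [hre, Finset.sum_map]
        simp only [addRightEmbedding_apply]
      rw [this, Finset.sum_Icc_succ_top (by omega : k + 1 ≤ n + 1),
        Nat.choose_eq_zero_of_lt (by omega : n < n + 1)]
      rw [binTail]; push_cast; ring
    rw [e2]
    rfl
  · rw [binTail, binTail, binTail, Finset.Icc_eq_empty (by omega),
      Finset.Icc_eq_empty (by omega), Finset.Icc_eq_empty (by omega)]
    simp

lemma binTail_mono_n {n n' : ℕ} (h : n ≤ n') (k : ℕ) {t : ℝ} (ht : t ∈ Set.Icc (0:ℝ) 1) :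
    binTail n t (k+1) ≤ binTail n' t (k+1) := by
  induction n' with
  | zero =>
    have hn : n = 0 := Nat.le_zero.mp h
    subst hn; exact le_rfl
  | succ n'' ih =>
    rcases Nat.lt_or_ge n (n''+1) with hlt | hge
    · have step : binTail n'' t (k+1) ≤ binTail (n''+1) t (k+1) := by
        rw [binTail_pascal]
        have h1 : binTail n'' t (k+1) ≤ binTail n'' t k :=
          binTail_anti_k _ (Nat.le_succ k) ht
        nlinarith [ht.1, ht.2, binTail_nonneg n'' (k+1) ht, binTail_nonneg n'' k ht]
      exact le_trans (ih (by omega)) step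
    · have : n = n'' + 1 := by omega
      subst this; exact le_rfl

lemma binTail_eq_eval (n k : ℕ) (t : ℝ) :
    binTail n t k = (∑ j ∈ Finset.Icc k n, bernsteinPolynomial ℝ n j).eval t := by
  simp only [binTail, Polynomial.eval_finset_sum]
  refine Finset.sum_congr rfl fun j _ => ?_
  simp [bernsteinPolynomial]

lemma derivative_tailPoly (n k : ℕ) :
    Polynomial.derivative (∑ j ∈ Finset.Icc (k+1) (n+1), bernsteinPolynomial ℝ (n+1) j)
      = ((n:ℝ[X])+1) * bernsteinPolynomial ℝ n k := by
  rw [← Finset.map_add_right_Icc k n 1, Finset.sum_map, map_sum]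
  rcases le_or_gt k n with hk | hk
  · have hre : Finset.Icc k n = Finset.map ⟨fun i => k + i, add_right_injective k⟩
        (Finset.range (n + 1 - k)) := by
      ext x
      simp only [Finset.mem_Icc, Finset.mem_map, Finset.mem_range, Function.Embedding.coeFn_mk]
      constructor
      · rintro ⟨h1, h2⟩; exact ⟨x - k, by omega, by omega⟩
      · rintro ⟨i, hi, rfl⟩; omega
    simp only [hre, Finset.sum_map, Function.Embedding.coeFn_mk, addRightEmbedding_apply,
      bernsteinPolynomial.derivative_succ_aux]
    rw [← Finset.mul_sum]
    congr 1
    have := Finset.sum_range_sub' (fun i => bernsteinPolynomial ℝ n (k + i)) (n + 1 - k)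
    simp only [add_zero] at this
    calc ∑ i ∈ Finset.range (n + 1 - k),
          (bernsteinPolynomial ℝ n (k + i) - bernsteinPolynomial ℝ n (k + i + 1))
        = bernsteinPolynomial ℝ n k - bernsteinPolynomial ℝ n (k + (n + 1 - k)) := by
          rw [← this]; exact Finset.sum_congr rfl fun i _ => by ring_nf
      _ = bernsteinPolynomial ℝ n k := by
          have h0 : bernsteinPolynomial ℝ n (k + (n + 1 - k)) = 0 :=
            bernsteinPolynomial.eq_zero_of_lt ℝ (by omega)
          rw [h0, sub_zero]
  · rw [Finset.Icc_eq_empty (by omega), Finset.sum_empty,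
      bernsteinPolynomial.eq_zero_of_lt ℝ hk, mul_zero]

lemma binTail_mono_t (n k : ℕ) :
    MonotoneOn (fun t => binTail n t (k+1)) (Set.Icc (0:ℝ) 1) := by
  cases n with
  | zero =>
    intro x _ y _ _
    simp only [binTail, Finset.Icc_eq_empty (by omega : ¬ k + 1 ≤ 0), Finset.sum_empty, le_refl]
  | succ n' =>
    set P : Polynomial ℝ := ∑ j ∈ Finset.Icc (k+1) (n'+1), bernsteinPolynomial ℝ (n'+1) j with hP
    have heq : ∀ t : ℝ, binTail (n'+1) t (k+1) = P.eval t := fun t => binTail_eq_eval _ _ _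
    have : MonotoneOn (fun t => P.eval t) (Set.Icc (0:ℝ) 1) := by
      apply monotoneOn_of_deriv_nonneg (convex_Icc 0 1)
        (P.continuous.continuousOn) (P.differentiable.differentiableOn)
      intro x hx
      rw [interior_Icc, Set.mem_Ioo] at hx
      rw [Polynomial.deriv, hP, derivative_tailPoly]
      have : (0:ℝ) ≤ (bernsteinPolynomial ℝ n' k).eval x := by
        simp only [bernsteinPolynomial, eval_mul, eval_pow, eval_natCast, eval_X, eval_sub,
          eval_one]
        have h1 := hx.1; have h2 := hx.2
        have : (0:ℝ) ≤ 1 - x := by linarith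
        positivity
      simp only [eval_mul, eval_add, eval_natCast, eval_one]
      positivity
    intro x hx y hy hxy
    simp only [heq]
    exact this hx hy hxy

lemma card_filter_lt {m j : ℕ} (hjm : j ≤ m) :
    (Finset.univ.filter (fun j' : Fin m => (j' : ℕ) < j)).card = j := by
  have : (Finset.univ.filter (fun j' : Fin m => (j' : ℕ) < j))
      = Finset.map (Fin.castLEEmb hjm) Finset.univ := by
    ext x
    simp only [Finset.mem_filter, Finset.mem_univ, true_and, Finset.mem_map,
      Fin.castLEEmb_apply]
    constructor
    · intro hx; exact ⟨⟨(x : ℕ), hx⟩, by ext; simp⟩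
    · rintro ⟨y, rfl⟩; simpa using y.isLt
  rw [this, Finset.card_map, Finset.card_univ, Fintype.card_fin]

lemma Ftil_mem {m : ℕ} (v : Fin m → ℝ) {t : ℝ} (ht : t ∈ Set.Icc (0:ℝ) 1)
    (hv : ∀ i, v i ∈ Set.Icc (0:ℝ) t) {j : ℕ} (hj1 : 1 ≤ j) (hjm : j ≤ m) :
    Ftil v j ∈ Set.Icc (0:ℝ) t := by
  set s := Finset.univ.filter (fun j' : Fin m => (j' : ℕ) < j) with hs
  set P := ∏ j' ∈ s, (1 - descSort v j') with hPdef
  have hfac : ∀ j' : Fin m, 1 - t ≤ 1 - descSort v j' ∧ 1 - descSort v j' ≤ 1 := by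
    intro j'
    have h1 : descSort v j' ∈ Set.Icc (0:ℝ) t := hv _
    exact ⟨by linarith [h1.2], by linarith [h1.1]⟩
  have h1t : (0:ℝ) ≤ 1 - t := by linarith [ht.2]
  have hP0 : 0 ≤ P := Finset.prod_nonneg fun i _ => le_trans h1t (hfac i).1
  have hP1 : P ≤ 1 := Finset.prod_le_one (fun i _ => le_trans h1t (hfac i).1)
    (fun i _ => (hfac i).2)
  have hPlow : (1 - t) ^ j ≤ P := by
    have := Finset.prod_le_prod (s := s) (f := fun _ => 1 - t) (g := fun i => 1 - descSort v i)
      (fun i _ => h1t) (fun i _ => (hfac i).1)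
    rwa [Finset.prod_const, card_filter_lt hjm] at this
  have hjne : (j:ℝ) ≠ 0 := Nat.cast_ne_zero.mpr (by omega)
  have hexp : (0:ℝ) ≤ 1 / j := by positivity
  constructor
  · have : P ^ ((1:ℝ)/j) ≤ 1 := Real.rpow_le_one hP0 hP1 hexp
    simp only [Ftil, ← hs, ← hPdef]
    linarith
  · have key : 1 - t ≤ P ^ ((1:ℝ)/j) := by
      have h1 : ((1-t) ^ j : ℝ) ^ ((1:ℝ)/j) ≤ P ^ ((1:ℝ)/j) :=
        Real.rpow_le_rpow (by positivity) hPlow hexp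
      have h2 : ((1-t) ^ j : ℝ) ^ ((1:ℝ)/j) = 1 - t := by
        rw [← Real.rpow_natCast (1-t) j, ← Real.rpow_mul h1t]
        rw [mul_one_div, div_self hjne, Real.rpow_one]
      linarith
    simp only [Ftil, ← hs, ← hPdef]
    linarith

end StmtNine

/-- Under super-uniformity (`F_i(t) ≤ t`), the step-down rejection set of the
Guo–Romano procedure (critical values `τ^GR_ℓ`, the greatest `t ∈ [0,1]` with
`P(Bin[m(ℓ),t] ≥ ⌊αℓ⌋+1) ≤ ζ`) is contained in that of the heterogeneous Guo–Romano
procedure (critical values `τ^HGR_ℓ`, the greatest element of `{t ∈ A : ξ^HGR_ℓ(t) ≤ ζ}`,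
or `0` if empty, with `ξ^HGR_ℓ(t) = P(Bin[m(ℓ), F̃_{m(ℓ)}(t)] ≥ ⌊αℓ⌋+1)`), for p-values
lying in `A`. -/
theorem stmt_9
    {m : ℕ} {α ζ : ℝ} (hα : α ∈ Set.Ioo (0 : ℝ) 1) (hζ : ζ ∈ Set.Ioo (0 : ℝ) 1)
    (A : Set ℝ) (hA : A ⊆ Set.Icc 0 1)
    (F : Fin m → ℝ → ℝ)
    (hFmono : ∀ i, MonotoneOn (F i) (Set.Icc (0 : ℝ) 1))
    (hF01 : ∀ i, ∀ t ∈ Set.Icc (0 : ℝ) 1, F i t ∈ Set.Icc (0 : ℝ) 1)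
    (hFsup : ∀ i, ∀ t ∈ Set.Icc (0 : ℝ) 1, F i t ≤ t)
    (ξGR ξHGR : ℕ → ℝ → ℝ)
    (hξGR : ∀ ℓ t, ξGR ℓ t = FDX.binTail (FDX.mfun α m ℓ) t (FDX.kfun α ℓ))
    (hξHGR : ∀ ℓ t, ξHGR ℓ t =
      FDX.binTail (FDX.mfun α m ℓ)
        (FDX.Ftil (fun i => F i t) (FDX.mfun α m ℓ)) (FDX.kfun α ℓ))
    (τGR τHGR : ℕ → ℝ)
    (hτGR : ∀ ℓ ∈ Finset.Icc 1 m,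
      IsGreatest {t | t ∈ Set.Icc (0 : ℝ) 1 ∧ ξGR ℓ t ≤ ζ} (τGR ℓ))
    (hτHGR : ∀ ℓ ∈ Finset.Icc 1 m,
      IsGreatest {t | t ∈ A ∧ ξHGR ℓ t ≤ ζ} (τHGR ℓ) ∨
        ({t | t ∈ A ∧ ξHGR ℓ t ≤ ζ} = ∅ ∧ τHGR ℓ = 0))
    (p : Fin m → ℝ) (hp : ∀ i, p i ∈ A) :
    FDX.sdReject p τGR ⊆ FDX.sdReject p τHGR := by
  classical
  obtain ⟨hα0, hα1⟩ := hα
  -- floor of α·ℓ is < ℓ for ℓ ≥ 1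
  have hfloor : ∀ ℓ : ℕ, 1 ≤ ℓ → ⌊α * ℓ⌋₊ < ℓ := by
    intro ℓ h1
    have hc : (1:ℝ) ≤ (ℓ:ℝ) := by exact_mod_cast h1
    refine (Nat.floor_lt (by positivity)).mpr ?_
    nlinarith
  have hmfun_le : ∀ ℓ : ℕ, 1 ≤ ℓ → ℓ ≤ m → FDX.mfun α m ℓ ≤ m := by
    intro ℓ h1 h2
    have := hfloor ℓ h1
    simp only [FDX.mfun]
    omega
  have hmfun_ge : ∀ ℓ : ℕ, 1 ≤ FDX.mfun α m ℓ := by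
    intro ℓ; simp [FDX.mfun]
  -- floor increments by at most one
  have hfloorstep : ∀ ℓ : ℕ, ⌊α * ℓ⌋₊ ≤ ⌊α * (ℓ+1 : ℕ)⌋₊ ∧ ⌊α * (ℓ+1 : ℕ)⌋₊ ≤ ⌊α * ℓ⌋₊ + 1 := by
    intro ℓ
    have hc : ((ℓ+1 : ℕ) : ℝ) = (ℓ:ℝ) + 1 := by push_cast; ring
    constructor
    · exact Nat.floor_le_floor (by nlinarith)
    · calc ⌊α * (ℓ+1 : ℕ)⌋₊ ≤ ⌊α * ℓ + 1⌋₊ := Nat.floor_le_floor (by rw [hc]; nlinarith)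
        _ = ⌊α * ℓ⌋₊ + 1 := Nat.floor_add_one (by positivity)
  -- ξGR is nonincreasing in ℓ on [1, m]
  have hstep : ∀ ℓ : ℕ, 1 ≤ ℓ → ℓ + 1 ≤ m → ∀ t ∈ Set.Icc (0:ℝ) 1,
      ξGR (ℓ+1) t ≤ ξGR ℓ t := by
    intro ℓ h1 h2 t ht
    rw [hξGR, hξGR]
    obtain ⟨hab, hba⟩ := hfloorstep ℓ
    have hkℓ : FDX.kfun α ℓ = ⌊α * (ℓ:ℕ)⌋₊ + 1 := rfl
    rcases (by omega : ⌊α * ((ℓ+1:ℕ):ℝ)⌋₊ = ⌊α * ((ℓ:ℕ):ℝ)⌋₊ ∨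
        ⌊α * ((ℓ+1:ℕ):ℝ)⌋₊ = ⌊α * ((ℓ:ℕ):ℝ)⌋₊ + 1) with hcase | hcase
    · have e1 : FDX.kfun α (ℓ+1) = FDX.kfun α ℓ := by
        simp only [FDX.kfun, hcase]
      have e2 : FDX.mfun α m ℓ = FDX.mfun α m (ℓ+1) + 1 := by
        simp only [FDX.mfun, hcase]; omega
      rw [e1, e2, hkℓ]
      exact StmtNine.binTail_mono_n (Nat.le_succ _) _ ht
    · have e1 : FDX.kfun α (ℓ+1) = FDX.kfun α ℓ + 1 := by
        simp only [FDX.kfun, hcase]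
      have e2 : FDX.mfun α m (ℓ+1) = FDX.mfun α m ℓ := by
        simp only [FDX.mfun, hcase]; omega
      rw [e1, e2]
      exact StmtNine.binTail_anti_k _ (Nat.le_succ _) ht
  -- τGR is nondecreasing on [1, m]
  have hτmono : ∀ ℓ ℓ' : ℕ, 1 ≤ ℓ → ℓ ≤ ℓ' → ℓ' ≤ m → τGR ℓ ≤ τGR ℓ' := by
    intro ℓ ℓ' h1 hle hm'
    induction ℓ' with
    | zero => omega
    | succ n ih =>
      rcases Nat.lt_or_ge ℓ (n+1) with hlt | hge
      · have hn1 : 1 ≤ n := by omega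
        have hstepτ : τGR n ≤ τGR (n+1) := by
          have hmemn : τGR n ∈ {t | t ∈ Set.Icc (0:ℝ) 1 ∧ ξGR n t ≤ ζ} :=
            (hτGR n (Finset.mem_Icc.mpr ⟨hn1, by omega⟩)).1
        
          refine (hτGR (n+1) (Finset.mem_Icc.mpr ⟨by omega, hm'⟩)).2 ?_
          refine ⟨hmemn.1, ?_⟩
          exact le_trans (hstep n hn1 hm' (τGR n) hmemn.1) hmemn.2
        exact le_trans (ih (by omega) (by omega)) hstepτ
      · have : ℓ = n + 1 := by omega
        subst this; exact le_rfl
  -- the key pointwise comparison: t ≤ τGR ℓ implies t ≤ τHGR ℓ for t ∈ A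
  have hstar : ∀ ℓ : ℕ, 1 ≤ ℓ → ℓ ≤ m → ∀ t, t ∈ A → t ≤ τGR ℓ → t ≤ τHGR ℓ := by
    intro ℓ h1 h2 t htA htle
    have ht01 : t ∈ Set.Icc (0:ℝ) 1 := hA htA
    have hτ01 : τGR ℓ ∈ Set.Icc (0:ℝ) 1 ∧ ξGR ℓ (τGR ℓ) ≤ ζ :=
      (hτGR ℓ (Finset.mem_Icc.mpr ⟨h1, h2⟩)).1
    set q := FDX.Ftil (fun i => F i t) (FDX.mfun α m ℓ) with hq
    have hqmem : q ∈ Set.Icc (0:ℝ) t := by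
      refine StmtNine.Ftil_mem _ ht01 (fun i => ⟨(hF01 i t ht01).1, hFsup i t ht01⟩)
        (hmfun_ge ℓ) (hmfun_le ℓ h1 h2)
    have hξle : ξHGR ℓ t ≤ ζ := by
      rw [hξHGR]
      have hkf : FDX.kfun α ℓ = ⌊α * ℓ⌋₊ + 1 := rfl
      have hmono := StmtNine.binTail_mono_t (FDX.mfun α m ℓ) ⌊α * ℓ⌋₊
      have hq01 : q ∈ Set.Icc (0:ℝ) 1 := ⟨hqmem.1, le_trans hqmem.2 ht01.2⟩
      have hle2 : q ≤ τGR ℓ := le_trans hqmem.2 htle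
      calc FDX.binTail (FDX.mfun α m ℓ) q (FDX.kfun α ℓ)
          ≤ FDX.binTail (FDX.mfun α m ℓ) (τGR ℓ) (FDX.kfun α ℓ) := by
            rw [hkf]; exact hmono hq01 hτ01.1 hle2
        _ = ξGR ℓ (τGR ℓ) := (hξGR ℓ (τGR ℓ)).symm
        _ ≤ ζ := hτ01.2
    rcases hτHGR ℓ (Finset.mem_Icc.mpr ⟨h1, h2⟩) with hgr | ⟨hempty, _⟩
    · exact hgr.2 ⟨htA, hξle⟩
    · exfalso
      have : t ∈ {t | t ∈ A ∧ ξHGR ℓ t ≤ ζ} := ⟨htA, hξle⟩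
      rw [hempty] at this
      exact this
  -- counts compare
  have hcount : ∀ ℓ : ℕ, 1 ≤ ℓ → ℓ ≤ m →
      FDX.countLe p (τGR ℓ) ≤ FDX.countLe p (τHGR ℓ) := by
    intro ℓ h1 h2
    refine Finset.card_le_card ?_
    intro i hi
    simp only [Finset.mem_filter, Finset.mem_univ, true_and] at hi ⊢
    exact hstar ℓ h1 h2 (p i) (hp i) hi
  -- compare the step-down indices
  intro i hi
  rw [FDX.sdReject] at hi
  by_cases hL0 : FDX.sdIndex p τGR = 0
  · rw [if_pos hL0] at hi; exact absurd hi (Finset.notMem_empty i)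
  rw [if_neg hL0, Finset.mem_filter] at hi
  have hsdG : FDX.sdIndex p τGR = Nat.findGreatest
      (fun ℓ => ∀ ℓ', 1 ≤ ℓ' → ℓ' ≤ ℓ → ℓ' ≤ FDX.countLe p (τGR ℓ')) m := by
    rw [FDX.sdIndex]
  have hsdH : FDX.sdIndex p τHGR = Nat.findGreatest
      (fun ℓ => ∀ ℓ', 1 ≤ ℓ' → ℓ' ≤ ℓ → ℓ' ≤ FDX.countLe p (τHGR ℓ')) m := by
    rw [FDX.sdIndex]
  have hLm : FDX.sdIndex p τGR ≤ m := by
    rw [hsdG]; exact @Nat.findGreatest_le _ (Classical.decPred _) m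
  have hPG : ∀ ℓ', 1 ≤ ℓ' → ℓ' ≤ FDX.sdIndex p τGR → ℓ' ≤ FDX.countLe p (τGR ℓ') := by
    rw [hsdG]
    exact @Nat.findGreatest_spec 0
      (fun ℓ => ∀ ℓ', 1 ≤ ℓ' → ℓ' ≤ ℓ → ℓ' ≤ FDX.countLe p (τGR ℓ'))
      (Classical.decPred _) m (Nat.zero_le m) (fun ℓ' h1 h2 => by omega)
  have hLL' : FDX.sdIndex p τGR ≤ FDX.sdIndex p τHGR := by
    rw [hsdH]
    refine @Nat.le_findGreatest _ _ (Classical.decPred _) m hLm ?_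
    intro ℓ' h1 h2
    exact le_trans (hPG ℓ' h1 h2) (hcount ℓ' h1 (le_trans h2 hLm))
  have hL'm : FDX.sdIndex p τHGR ≤ m := by
    rw [hsdH]; exact @Nat.findGreatest_le _ (Classical.decPred _) m
  have hL'0 : FDX.sdIndex p τHGR ≠ 0 := by omega
  rw [FDX.sdReject, if_neg hL'0, Finset.mem_filter]
  refine ⟨Finset.mem_univ i, ?_⟩
  have hL1 : 1 ≤ FDX.sdIndex p τGR := by omega
  have h1 : p i ≤ τGR (FDX.sdIndex p τHGR) :=
    le_trans hi.2 (hτmono _ _ hL1 hLL' hL'm)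
  exact hstar _ (by omega) hL'm (p i) (hp i) h1
end

section
/- (Lemma 6.1, monotonicity of the heterogeneous Guo–Romano transformation family.) Let m ≥ 1 and let a_1 ≥ a_2 ≥ … ≥ a_m be a nonincreasing sequence in [0,1]. For 1 ≤ j ≤ m define F̃_j = 1 − ( ∏_{j'=1}^{j} (1 − a_{j'}) )^{1/j}. Then the quantity g(i, ℓ) = P( Bin[m − ℓ + i, F̃_{m−ℓ+i}] ≥ i ) is nonincreasing in i and nonincreasing in ℓ, over the range 1 ≤ i ≤ ℓ ≤ m; that is, g(i+1, ℓ) ≤ g(i, ℓ) whenever 1 ≤ i < i+1 ≤ ℓ ≤ m, and g(i, ℓ+1) ≤ g(i, ℓ) whenever 1 ≤ i ≤ ℓ < ℓ+1 ≤ m. -/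
open MeasureTheory ProbabilityTheory Finset

namespace GRX

noncomputable def T (K j : ℕ) : ℝ :=
  ∑ r ∈ Finset.range (j+1), (-1:ℝ)^(j-r) * (j.choose r : ℝ) * (r:ℝ)^K

lemma T_zero (j : ℕ) : T 0 j = if j = 0 then 1 else 0 := by
  have h := add_pow (1:ℝ) (-1) j
  rw [show (1:ℝ) + (-1) = 0 by ring, zero_pow_eq] at h
  rw [T, h]
  refine Finset.sum_congr rfl fun r hr => ?_
  rw [pow_zero]
  ring

lemma T_succ_zero (K : ℕ) : T (K+1) 0 = 0 := by simp [T]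

lemma T_succ_aux (K j : ℕ) :
    T (K+1) (j+1) = ((j:ℝ)+1) * ∑ i ∈ range (j+1), (-1:ℝ)^(j-i) * (j.choose i : ℝ) * ((i:ℝ)+1)^K := by
  rw [T, Finset.sum_range_succ']
  have h0 : (-1:ℝ)^(j+1-0) * (((j+1).choose 0 : ℕ):ℝ) * ((0:ℕ):ℝ)^(K+1) = 0 := by
    simp
  rw [h0, add_zero, Finset.mul_sum]
  refine Finset.sum_congr rfl fun i hi => ?_
  have hc : (((j+1).choose (i+1) : ℕ):ℝ) * ((i:ℝ)+1) = ((j:ℝ)+1) * (j.choose i : ℝ) := by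
    have h := Nat.add_one_mul_choose_eq j i
    have h' := congrArg (Nat.cast : ℕ → ℝ) h
    push_cast at h'
    linarith [h']
  have hs : j + 1 - (i+1) = j - i := Nat.succ_sub_succ j i
  rw [hs]
  have hp : ((i:ℕ)+1 : ℕ) = i + 1 := rfl
  push_cast
  rw [show ((i:ℝ)+1)^(K+1) = ((i:ℝ)+1)^K * ((i:ℝ)+1) by rw [pow_succ]]
  linear_combination ((-1:ℝ)^(j-i) * ((i:ℝ)+1)^K) * hc

lemma T_shift (K j : ℕ) :
    ∑ i ∈ range (j+1), (-1:ℝ)^(j-i) * (j.choose i : ℝ) * ((i:ℝ)+1)^K = T K (j+1) + T K j := by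
  -- expand T K (j+1)
  have e1 : T K (j+1)
      = (∑ i ∈ range (j+1), (-1:ℝ)^(j-i) * (((j+1).choose (i+1) : ℕ):ℝ) * ((i:ℝ)+1)^K)
        + (-1:ℝ)^(j+1) * ((0:ℝ))^K := by
    rw [T, Finset.sum_range_succ']
    congr 1
    · refine Finset.sum_congr rfl fun i hi => ?_
      rw [Nat.succ_sub_succ]
      push_cast
      ring
    · simp
  -- expand T K j, peeling r = 0
  have e2 : T K j
      = (∑ i ∈ range j, (-1:ℝ)^(j-(i+1)) * ((j.choose (i+1) : ℕ):ℝ) * ((i:ℝ)+1)^K)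
        + (-1:ℝ)^j * ((0:ℝ))^K := by
    rw [T, Finset.sum_range_succ']
    congr 1
    · refine Finset.sum_congr rfl fun i hi => ?_
      push_cast
      ring
    · simp
  -- second sum in choose_succ_succ' split
  have e3 : ∑ i ∈ range (j+1), (-1:ℝ)^(j-i) * ((j.choose (i+1) : ℕ):ℝ) * ((i:ℝ)+1)^K
      = -(∑ i ∈ range j, (-1:ℝ)^(j-(i+1)) * ((j.choose (i+1) : ℕ):ℝ) * ((i:ℝ)+1)^K) := by
    rw [Finset.sum_range_succ]
    rw [Nat.choose_succ_self]
    push_cast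
    rw [mul_zero, zero_mul, add_zero]
    rw [← Finset.sum_neg_distrib]
    refine Finset.sum_congr rfl fun i hi => ?_
    have hij : i < j := Finset.mem_range.mp hi
    have hd : j - i = (j - (i+1)) + 1 := by omega
    rw [hd, pow_succ]
    ring
  have e4 : ∀ i ∈ range (j+1), (-1:ℝ)^(j-i) * (((j+1).choose (i+1) : ℕ):ℝ) * ((i:ℝ)+1)^K
      = (-1:ℝ)^(j-i) * ((j.choose i : ℕ):ℝ) * ((i:ℝ)+1)^K
        + (-1:ℝ)^(j-i) * ((j.choose (i+1) : ℕ):ℝ) * ((i:ℝ)+1)^K := by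
    intro i hi
    rw [Nat.choose_succ_succ' j i]
    push_cast
    ring
  rw [Finset.sum_congr rfl e4, Finset.sum_add_distrib, e3] at e1
  have hpow : (-1:ℝ)^(j+1) * ((0:ℝ))^K = -((-1:ℝ)^j * ((0:ℝ))^K) := by
    rw [pow_succ]; ring
  rw [hpow] at e1
  have := e2
  linarith [e1, e2]

lemma T_succ (K j : ℕ) : T (K+1) (j+1) = ((j:ℝ)+1) * (T K (j+1) + T K j) := by
  rw [T_succ_aux, T_shift]

lemma T_nonneg : ∀ K j, 0 ≤ T K j := by
  intro K
  induction K with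
  | zero =>
    intro j; rw [T_zero]; split <;> norm_num
  | succ K ih =>
    intro j
    cases j with
    | zero => rw [T_succ_zero]
    | succ j =>
      rw [T_succ]
      have := ih (j+1); have := ih j
      positivity

lemma T_le (K j : ℕ) : T K j ≤ (2:ℝ)^j * (j:ℝ)^K := by
  have h1 : T K j ≤ ∑ r ∈ range (j+1), (j.choose r : ℝ) * (j:ℝ)^K := by
    apply Finset.sum_le_sum
    intro r hr
    have hr' : r ≤ j := Nat.lt_succ_iff.mp (Finset.mem_range.mp hr)
    have hA : (0:ℝ) ≤ (j.choose r : ℝ) * (r:ℝ)^K := by positivity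
    have hrj : ((r:ℝ))^K ≤ ((j:ℝ))^K := by
      apply pow_le_pow_left₀ (by positivity) (by exact_mod_cast hr')
    have hsign : (-1:ℝ)^(j-r) * (j.choose r:ℝ) * (r:ℝ)^K ≤ (j.choose r:ℝ) * (r:ℝ)^K := by
      rcases Nat.even_or_odd (j-r) with he | ho
      · rw [he.neg_one_pow, one_mul]
      · rw [ho.neg_one_pow]
        nlinarith [hA]
    calc (-1:ℝ)^(j-r) * (j.choose r:ℝ) * (r:ℝ)^K ≤ (j.choose r:ℝ) * (r:ℝ)^K := hsign
      _ ≤ (j.choose r:ℝ) * (j:ℝ)^K := mul_le_mul_of_nonneg_left hrj (by positivity)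
  refine h1.trans ?_
  rw [← Finset.sum_mul]
  apply le_of_eq
  congr 1
  have h' := congrArg (Nat.cast : ℕ → ℝ) (Nat.sum_range_choose j)
  push_cast at h'
  exact h'


noncomputable def cf (n x : ℕ) : ℝ := ((n - x : ℕ) : ℝ) / n

lemma cf_nonneg (n x : ℕ) : 0 ≤ cf n x := by unfold cf; positivity

lemma cf_le_one (n x : ℕ) (hn : 1 ≤ n) : cf n x ≤ 1 := by
  unfold cf
  rw [div_le_one (by exact_mod_cast hn)]
  exact_mod_cast Nat.sub_le n x

lemma cf_mono (n x : ℕ) (hn : 1 ≤ n) : cf n x ≤ cf (n+1) x := by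
  unfold cf
  have hn0 : (0:ℝ) < n := by exact_mod_cast hn
  rw [div_le_div_iff₀ hn0 (by positivity)]
  rcases le_or_gt x n with h | h
  · have h1 : ((n - x : ℕ):ℝ) = (n:ℝ) - x := Nat.cast_sub h
    have h2 : ((n + 1 - x : ℕ):ℝ) = (n:ℝ) + 1 - x := by
      have h3 : ((n + 1 - x : ℕ):ℝ) = ((n+1 : ℕ):ℝ) - (x:ℝ) := by exact_mod_cast Nat.cast_sub (by omega)
      push_cast at h3; linarith
    rw [h1, h2]
    have hx : (0:ℝ) ≤ x := by positivity
    push_cast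
    nlinarith
  · have h1 : n - x = 0 := by omega
    rw [h1]
    simp only [Nat.cast_zero, zero_mul]
    positivity

noncomputable def hfun (n k : ℕ) : ℕ → ℕ → ℝ
  | 0, x => if x ≤ k then 1 else 0
  | (K+1), x => (1 - cf n x) * hfun n k K x + cf n x * hfun n k K (x+1)

lemma hfun_zero (n k x : ℕ) : hfun n k 0 x = if x ≤ k then 1 else 0 := rfl
lemma hfun_succ (n k K x : ℕ) :
    hfun n k (K+1) x = (1 - cf n x) * hfun n k K x + cf n x * hfun n k K (x+1) := rfl

lemma hfun_nonneg (n k : ℕ) (hn : 1 ≤ n) : ∀ K x, 0 ≤ hfun n k K x := by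
  intro K
  induction K with
  | zero => intro x; rw [hfun_zero]; split <;> norm_num
  | succ K ih =>
    intro x
    rw [hfun_succ]
    have h1 := cf_nonneg n x
    have h2 := cf_le_one n x hn
    have := ih x; have := ih (x+1)
    nlinarith

lemma hfun_le_one (n k : ℕ) (hn : 1 ≤ n) : ∀ K x, hfun n k K x ≤ 1 := by
  intro K
  induction K with
  | zero => intro x; rw [hfun_zero]; split <;> norm_num
  | succ K ih =>
    intro x
    rw [hfun_succ]
    have h1 := cf_nonneg n x
    have h2 := cf_le_one n x hn
    have := ih x; have := ih (x+1)
    nlinarith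

lemma hfun_anti (n k : ℕ) (hn : 1 ≤ n) : ∀ K x, hfun n k K (x+1) ≤ hfun n k K x := by
  intro K
  induction K with
  | zero =>
    intro x; rw [hfun_zero, hfun_zero]
    by_cases h1 : x + 1 ≤ k
    · rw [if_pos h1, if_pos (by omega)]
    · rw [if_neg h1]; split <;> norm_num
  | succ K ih =>
    intro x
    rw [hfun_succ, hfun_succ]
    have c1 := cf_nonneg n x
    have c2 := cf_le_one n x hn
    have c3 := cf_nonneg n (x+1)
    have c4 := cf_le_one n (x+1) hn
    have i1 := ih x
    have i2 := ih (x+1)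
    nlinarith

lemma hfun_mono_n (n k : ℕ) (hn : 1 ≤ n) : ∀ K x, hfun (n+1) k K x ≤ hfun n k K x := by
  intro K
  induction K with
  | zero => intro x; rw [hfun_zero, hfun_zero]
  | succ K ih =>
    intro x
    rw [hfun_succ, hfun_succ]
    have c1 := cf_nonneg n x
    have c2 := cf_le_one n x hn
    have c1' := cf_nonneg (n+1) x
    have c2' := cf_le_one (n+1) x (by omega)
    have cm := cf_mono n x hn
    have i1 := ih x
    have i2 := ih (x+1)
    have a1 := hfun_anti n k hn K x
    nlinarith [mul_nonneg (sub_nonneg.mpr c2') (sub_nonneg.mpr i1),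
      mul_nonneg c1' (sub_nonneg.mpr i2),
      mul_nonneg (sub_nonneg.mpr cm) (sub_nonneg.mpr a1)]

noncomputable def W (n K j : ℕ) : ℝ := (n.choose j : ℝ) * T K j

lemma W_succ (n K i : ℕ) :
    W n (K+1) (i+1) = ((i:ℝ)+1) * W n K (i+1) + ((n - i:ℕ):ℝ) * W n K i := by
  unfold W
  rw [T_succ]
  have h := congrArg (Nat.cast : ℕ → ℝ) (Nat.choose_succ_right_eq n i)
  push_cast [-Nat.cast_sub] at h
  linear_combination (T K i) * h + ((i:ℝ)+1) * (T K (i+1) + T K i) * (0:ℝ)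

lemma inv_step (n k K M : ℕ) (hn : 1 ≤ n) :
    ∑ j ∈ range (n+1), W n (K+1) j * hfun n k M j
      = (n:ℝ) * ∑ j ∈ range (n+1), W n K j * hfun n k (M+1) j := by
  have hL : ∑ j ∈ range (n+1), W n (K+1) j * hfun n k M j
      = ∑ i ∈ range n, W n (K+1) (i+1) * hfun n k M (i+1) := by
    rw [Finset.sum_range_succ']
    have h0 : W n (K+1) 0 * hfun n k M 0 = 0 := by
      unfold W; rw [T_succ_zero]; ring
    rw [h0, add_zero]
  rw [hL]
  have hsplit : ∀ i ∈ range n, W n (K+1) (i+1) * hfun n k M (i+1)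
      = ((i:ℝ)+1) * W n K (i+1) * hfun n k M (i+1)
        + ((n - i:ℕ):ℝ) * W n K i * hfun n k M (i+1) := by
    intro i _
    rw [W_succ]
    ring
  rw [Finset.sum_congr rfl hsplit, Finset.sum_add_distrib]
  have h1 : ∑ i ∈ range n, ((i:ℝ)+1) * W n K (i+1) * hfun n k M (i+1)
      = ∑ j ∈ range (n+1), (j:ℝ) * W n K j * hfun n k M j := by
    rw [Finset.sum_range_succ']
    simp
  have h2 : ∑ i ∈ range n, ((n - i:ℕ):ℝ) * W n K i * hfun n k M (i+1)
      = ∑ j ∈ range (n+1), ((n - j:ℕ):ℝ) * W n K j * hfun n k M (j+1) := by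
    rw [Finset.sum_range_succ]
    simp
  rw [h1, h2, Finset.mul_sum, ← Finset.sum_add_distrib]
  refine Finset.sum_congr rfl fun j hj => ?_
  have hjn : j ≤ n := Nat.lt_succ_iff.mp (Finset.mem_range.mp hj)
  rw [hfun_succ]
  unfold cf
  have hc : ((n - j:ℕ):ℝ) = (n:ℝ) - j := Nat.cast_sub hjn
  have hn0 : (n:ℝ) ≠ 0 := by
    have : (0:ℝ) < n := by exact_mod_cast hn
    linarith
  rw [hc]
  field_simp
  ring

lemma sum_W_hfun (n k : ℕ) (hn : 1 ≤ n) :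
    ∀ K M, ∑ j ∈ range (n+1), W n K j * hfun n k M j = (n:ℝ)^K * hfun n k (K+M) 0 := by
  intro K
  induction K with
  | zero =>
    intro M
    have hz : ∀ j ∈ range (n+1), j ≠ 0 → W n 0 j * hfun n k M j = 0 := by
      intro j _ hj
      unfold W; rw [T_zero, if_neg hj]; ring
    rw [Finset.sum_eq_single_of_mem 0 (by simp) hz]
    unfold W
    rw [T_zero, if_pos rfl]
    simp
  | succ K ih =>
    intro M
    rw [inv_step n k K M hn, ih (M+1), pow_succ]
    rw [show K + (M+1) = (K+1) + M by omega]
    ring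

lemma V_eq_hfun (n k K : ℕ) (hn : 1 ≤ n) :
    ∑ j ∈ range (k+1), W n K j = (n:ℝ)^K * hfun n k K 0 := by
  have h : ∑ j ∈ range (n+1), W n K j * hfun n k 0 j = (n:ℝ)^K * hfun n k K 0 :=
    sum_W_hfun n k hn K 0
  rw [← h]
  have hzero : ∀ j, k < j → W n K j * hfun n k 0 j = 0 := by
    intro j hj
    rw [hfun_zero, if_neg (by omega)]; ring
  have hW : ∀ j, n < j → W n K j = 0 := by
    intro j hj
    unfold W; rw [Nat.choose_eq_zero_of_lt hj]; simp
  set N := max n k + 1 with hN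
  have hsub1 : range (k+1) ⊆ range N := by intro t ht; simp at ht ⊢; omega
  have hsub2 : range (n+1) ⊆ range N := by intro t ht; simp at ht ⊢; omega
  have e1 : ∑ j ∈ range (k+1), W n K j = ∑ j ∈ range (k+1), W n K j * hfun n k 0 j := by
    refine Finset.sum_congr rfl fun j hj => ?_
    have : j ≤ k := Nat.lt_succ_iff.mp (Finset.mem_range.mp hj)
    rw [hfun_zero, if_pos this]; ring
  have e2 : ∑ j ∈ range (k+1), W n K j * hfun n k 0 j = ∑ j ∈ range N, W n K j * hfun n k 0 j := by
    apply Finset.sum_subset hsub1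
    intro j _ hj
    exact hzero j (by simp at hj; omega)
  have e3 : ∑ j ∈ range (n+1), W n K j * hfun n k 0 j = ∑ j ∈ range N, W n K j * hfun n k 0 j := by
    apply Finset.sum_subset hsub2
    intro j _ hj
    rw [hW j (by simp at hj; omega)]; ring
  rw [e1, e2, ← e3]

lemma V_div_mono (n k K : ℕ) (hn : 1 ≤ n) :
    (∑ j ∈ range (k+1), W (n+1) K j) / ((n:ℝ)+1)^K ≤ (∑ j ∈ range (k+1), W n K j) / (n:ℝ)^K := by
  have hn0 : (0:ℝ) < n := by exact_mod_cast hn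
  have hA := V_eq_hfun n k K hn
  have hB := V_eq_hfun (n+1) k K (by omega)
  rw [show (((n+1:ℕ)):ℝ) = (n:ℝ)+1 by push_cast; ring] at hB
  rw [hA, hB, mul_div_cancel_left₀ _ (show ((n:ℝ)+1)^K ≠ 0 by positivity),
    mul_div_cancel_left₀ _ (show ((n:ℝ))^K ≠ 0 by positivity)]
  exact hfun_mono_n n k hn K 0

lemma V_nonneg (n k K : ℕ) : 0 ≤ ∑ j ∈ range (k+1), W n K j :=
  Finset.sum_nonneg fun j _ => mul_nonneg (by positivity) (T_nonneg K j)

lemma V_le (n k K : ℕ) (hn : 1 ≤ n) : ∑ j ∈ range (k+1), W n K j ≤ (n:ℝ)^K := by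
  rw [V_eq_hfun n k K hn]
  have h1 := hfun_le_one n k hn K 0
  have h2 : (0:ℝ) ≤ (n:ℝ)^K := by positivity
  nlinarith


lemma Tdef (K j : ℕ) : T K j = ∑ r ∈ Finset.range (j+1), (-1:ℝ)^(j-r) * (j.choose r : ℝ) * (r:ℝ)^K := rfl

lemma Wdef (n K j : ℕ) : W n K j = (n.choose j : ℝ) * T K j := rfl

lemma exp_tsum (z : ℝ) : Real.exp z = ∑' K : ℕ, z^K / (K.factorial : ℝ) := by
  rw [Real.exp_eq_exp_ℝ, NormedSpace.exp_eq_tsum_div]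

lemma summable_T_mul (j : ℕ) (y : ℝ) (hy : 0 ≤ y) :
    Summable (fun K : ℕ => T K j * y^K / (K.factorial : ℝ)) := by
  apply Summable.of_nonneg_of_le
    (fun K => div_nonneg (mul_nonneg (T_nonneg K j) (by positivity)) (by positivity))
    (fun K => ?_)
    (((Real.summable_pow_div_factorial ((j:ℝ)*y)).mul_left ((2:ℝ)^j)))
  have h1 : T K j * y^K ≤ (2:ℝ)^j * ((j:ℝ)*y)^K := by
    rw [mul_pow, ← mul_assoc]
    exact mul_le_mul_of_nonneg_right (T_le K j) (by positivity)
  have h3 : (2:ℝ)^j * (((j:ℝ)*y)^K / (K.factorial:ℝ)) = ((2:ℝ)^j * ((j:ℝ)*y)^K) / (K.factorial:ℝ) := by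
    ring
  rw [h3]
  gcongr

lemma exp_sub_one_pow (y : ℝ) (j : ℕ) :
    (Real.exp y - 1)^j = ∑' K : ℕ, T K j * y^K / (K.factorial : ℝ) := by
  have h1 : (Real.exp y - 1)^j
      = ∑ r ∈ range (j+1), ((-1:ℝ)^(j-r) * (j.choose r : ℝ)) * Real.exp ((r:ℝ)*y) := by
    have h := add_pow (Real.exp y) (-1) j
    rw [show Real.exp y + (-1) = Real.exp y - 1 by ring] at h
    rw [h]
    refine Finset.sum_congr rfl fun r hr => ?_
    rw [← Real.exp_nat_mul]
    ring
  rw [h1]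
  have h2 : ∀ r ∈ range (j+1),
      ((-1:ℝ)^(j-r) * (j.choose r : ℝ)) * Real.exp ((r:ℝ)*y)
      = ∑' K : ℕ, ((-1:ℝ)^(j-r) * (j.choose r : ℝ)) * (((r:ℝ)*y)^K / (K.factorial:ℝ)) := by
    intro r _
    rw [exp_tsum ((r:ℝ)*y), tsum_mul_left]
  rw [Finset.sum_congr rfl h2]
  rw [← Summable.tsum_finsetSum (fun (r : ℕ) (_ : r ∈ range (j+1)) =>
      (Real.summable_pow_div_factorial ((r:ℝ)*y)).mul_left ((-1:ℝ)^(j-r) * (j.choose r : ℝ)))]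
  refine tsum_congr fun K => ?_
  rw [Tdef]
  rw [Finset.sum_mul, Finset.sum_div]
  refine Finset.sum_congr rfl fun r _ => ?_
  rw [mul_pow]
  ring

lemma phi_repr (n k : ℕ) (hn : 1 ≤ n) (x : ℝ) (hx : 0 ≤ x) :
    ∑ j ∈ range (k+1), (n.choose j : ℝ) * (Real.exp (x/(n:ℝ)) - 1)^j
      = ∑' K : ℕ, ((∑ j ∈ range (k+1), W n K j) / (n:ℝ)^K) * (x^K / (K.factorial:ℝ)) := by
  have hn0 : (0:ℝ) < n := by exact_mod_cast hn
  have hne : (n:ℝ) ≠ 0 := ne_of_gt hn0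
  have hxy : (0:ℝ) ≤ x / n := by positivity
  have h1 : ∀ j ∈ range (k+1), (n.choose j:ℝ) * (Real.exp (x/(n:ℝ)) - 1)^j
      = ∑' K : ℕ, (n.choose j:ℝ) * (T K j * (x/(n:ℝ))^K / (K.factorial:ℝ)) := by
    intro j _
    rw [exp_sub_one_pow (x/(n:ℝ)) j, tsum_mul_left]
  rw [Finset.sum_congr rfl h1]
  rw [← Summable.tsum_finsetSum (fun j _ => (summable_T_mul j (x/(n:ℝ)) hxy).mul_left ((n.choose j : ℕ):ℝ))]
  refine tsum_congr fun K => ?_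
  rw [Finset.sum_div, Finset.sum_mul]
  refine Finset.sum_congr rfl fun j _ => ?_
  rw [Wdef, div_pow]
  have hf : ((K.factorial:ℕ):ℝ) ≠ 0 := by positivity
  field_simp

lemma summable_V (n k : ℕ) (hn : 1 ≤ n) (x : ℝ) (hx : 0 ≤ x) :
    Summable (fun K : ℕ => ((∑ j ∈ range (k+1), W n K j) / (n:ℝ)^K) * (x^K / (K.factorial:ℝ))) := by
  have hn0 : (0:ℝ) < n := by exact_mod_cast hn
  apply Summable.of_nonneg_of_le
    (fun K => mul_nonneg (div_nonneg (V_nonneg n k K) (by positivity)) (by positivity))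
    (fun K => ?_) (Real.summable_pow_div_factorial x)
  have h1 : (∑ j ∈ range (k+1), W n K j) / (n:ℝ)^K ≤ 1 := by
    rw [div_le_one (by positivity)]
    exact V_le n k K hn
  have h2 : (0:ℝ) ≤ x^K / (K.factorial:ℝ) := by positivity
  calc ((∑ j ∈ range (k+1), W n K j) / (n:ℝ)^K) * (x^K / (K.factorial:ℝ))
      ≤ 1 * (x^K / (K.factorial:ℝ)) := mul_le_mul_of_nonneg_right h1 h2
    _ = x^K / (K.factorial:ℝ) := one_mul _

lemma phi_mono (n k : ℕ) (hn : 1 ≤ n) (x : ℝ) (hx : 0 ≤ x) :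
    ∑ j ∈ range (k+1), ((n+1).choose j : ℝ) * (Real.exp (x/((n:ℝ)+1)) - 1)^j
      ≤ ∑ j ∈ range (k+1), (n.choose j : ℝ) * (Real.exp (x/(n:ℝ)) - 1)^j := by
  have hc : ((n+1:ℕ):ℝ) = (n:ℝ)+1 := by push_cast; ring
  have hA := phi_repr n k hn x hx
  have hB := phi_repr (n+1) k (by omega) x hx
  rw [hc] at hB
  rw [hA, hB]
  have hsB := summable_V (n+1) k (by omega) x hx
  rw [hc] at hsB
  apply Summable.tsum_le_tsum _ hsB (summable_V n k hn x hx)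
  intro K
  have h2 : (0:ℝ) ≤ x^K / (K.factorial:ℝ) := by positivity
  exact mul_le_mul_of_nonneg_right (V_div_mono n k K hn) h2

/-! ### Lower tail and FDX.binTail lemmas -/

noncomputable def Lo (n i : ℕ) (t : ℝ) : ℝ :=
  ∑ j ∈ range i, (n.choose j : ℝ) * t^j * (1-t)^(n-j)

lemma Lo_zero (n : ℕ) (t : ℝ) : Lo n 0 t = 0 := by simp [Lo]

lemma Lo_succ (n i : ℕ) (t : ℝ) :
    Lo n (i+1) t = Lo n i t + (n.choose i : ℝ) * t^i * (1-t)^(n-i) :=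
  Finset.sum_range_succ _ _

lemma Lo_base (i : ℕ) (t : ℝ) : Lo 0 (i+1) t = 1 := by
  unfold Lo
  rw [Finset.sum_eq_single 0]
  · simp
  · intro b _ hb
    rw [Nat.choose_eq_zero_of_lt (Nat.pos_of_ne_zero hb)]
    simp
  · intro h
    exact absurd (Finset.mem_range.mpr (by omega)) h

lemma Lo_pascal (n : ℕ) (t : ℝ) : ∀ i, Lo (n+1) (i+1) t = t * Lo n i t + (1-t) * Lo n (i+1) t := by
  intro i
  induction i with
  | zero =>
    rw [Lo_zero, Lo_succ, Lo_zero, Lo_succ, Lo_zero]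
    simp only [Nat.choose_zero_right, Nat.cast_one, Nat.sub_zero, pow_zero]
    rw [pow_succ]
    ring
  | succ i ih =>
    rw [Lo_succ (n+1) (i+1), ih, Lo_succ n (i+1), Lo_succ n i]
    rcases lt_or_ge i n with h | h
    · have hc : (((n+1).choose (i+1) : ℕ) : ℝ) = (n.choose i : ℝ) + (n.choose (i+1) : ℝ) := by
        rw [Nat.choose_succ_succ']
        push_cast
        ring
      have h1 : n + 1 - (i+1) = n - i := by omega
      have h2 : n - i = (n - (i+1)) + 1 := by omega
      rw [hc, h1, h2, pow_succ]
      ring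
    · rcases eq_or_lt_of_le h with h' | h'
      · rw [← h']
        simp only [Nat.choose_succ_self, Nat.choose_self, Nat.cast_one, Nat.cast_zero,
          Nat.sub_self, pow_zero, zero_mul, mul_zero, add_zero, mul_one]
        ring
      · have hc0 : n.choose (i+1) = 0 := Nat.choose_eq_zero_of_lt (by omega)
        have hc1 : (n+1).choose (i+1) = 0 := Nat.choose_eq_zero_of_lt (by omega)
        have hc2 : n.choose i = 0 := Nat.choose_eq_zero_of_lt (by omega)
        rw [hc0, hc1, hc2]
        simp

lemma Lo_nonneg (n i : ℕ) (t : ℝ) (h0 : 0 ≤ t) (h1 : t ≤ 1) : 0 ≤ Lo n i t := by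
  apply Finset.sum_nonneg
  intro j _
  have h2 : (0:ℝ) ≤ 1 - t := by linarith
  positivity

lemma Lo_mono_i (n i : ℕ) (t : ℝ) (h0 : 0 ≤ t) (h1 : t ≤ 1) : Lo n i t ≤ Lo n (i+1) t := by
  rw [Lo_succ]
  have h2 : (0:ℝ) ≤ 1 - t := by linarith
  have h3 : (0:ℝ) ≤ (n.choose i : ℝ) * t^i * (1-t)^(n-i) := by positivity
  linarith

lemma Lo_anti_t : ∀ n i (t t' : ℝ), 0 ≤ t → t ≤ t' → t' ≤ 1 → Lo n i t' ≤ Lo n i t := by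
  intro n
  induction n with
  | zero =>
    intro i t t' _ _ _
    cases i with
    | zero => rw [Lo_zero, Lo_zero]
    | succ i => rw [Lo_base, Lo_base]
  | succ n ih =>
    intro i t t' h0 h1 h2
    cases i with
    | zero => rw [Lo_zero, Lo_zero]
    | succ i =>
      rw [Lo_pascal, Lo_pascal]
      have ha := ih i t t' h0 h1 h2
      have hb := ih (i+1) t t' h0 h1 h2
      have hm := Lo_mono_i n i t h0 (h1.trans h2)
      have hm' := Lo_mono_i n i t' (h0.trans h1) h2
      nlinarith [mul_nonneg (h0.trans h1) (sub_nonneg.mpr ha),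
        mul_nonneg (sub_nonneg.mpr h2) (sub_nonneg.mpr hb),
        mul_nonneg (sub_nonneg.mpr h1) (sub_nonneg.mpr hm)]

lemma binTail_eq (n i : ℕ) (hi : i ≤ n) (t : ℝ) :
    FDX.binTail n t i = 1 - Lo n i t := by
  have hone : ∑ j ∈ range (n+1), (n.choose j:ℝ) * t^j * (1-t)^(n-j) = 1 := by
    have h := add_pow t (1-t) n
    rw [show t + (1-t) = (1:ℝ) by ring, one_pow] at h
    calc ∑ j ∈ range (n+1), (n.choose j:ℝ) * t^j * (1-t)^(n-j)
        = ∑ j ∈ range (n+1), t^j * (1-t)^(n-j) * (n.choose j:ℝ) :=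
          Finset.sum_congr rfl fun j _ => by ring
      _ = 1 := h.symm
  have hsplit : ∑ j ∈ range i, (n.choose j:ℝ) * t^j * (1-t)^(n-j)
      + ∑ j ∈ Finset.Ico i (n+1), (n.choose j:ℝ) * t^j * (1-t)^(n-j)
      = ∑ j ∈ range (n+1), (n.choose j:ℝ) * t^j * (1-t)^(n-j) :=
    Finset.sum_range_add_sum_Ico _ (by omega)
  rw [hone] at hsplit
  unfold FDX.binTail Lo
  rw [← Finset.Ico_add_one_right_eq_Icc]
  linarith

lemma binTail_one (n i : ℕ) (hi : i ≤ n) : FDX.binTail n (1:ℝ) i = 1 := by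
  rw [binTail_eq n i hi]
  have : Lo n i 1 = 0 := by
    apply Finset.sum_eq_zero
    intro j hj
    have hj' : j < i := Finset.mem_range.mp hj
    rw [show (1:ℝ) - 1 = 0 by ring, zero_pow (by omega : n - j ≠ 0)]
    ring
  rw [this]
  ring

lemma binTail_mono_t (n i : ℕ) (hi : i ≤ n) {t t' : ℝ} (h0 : 0 ≤ t) (h1 : t ≤ t') (h2 : t' ≤ 1) :
    FDX.binTail n t i ≤ FDX.binTail n t' i := by
  rw [binTail_eq n i hi, binTail_eq n i hi]
  have := Lo_anti_t n i t t' h0 h1 h2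
  linarith

lemma binTail_step (n i : ℕ) (hi : i ≤ n) {t : ℝ} (h0 : 0 ≤ t) (h1 : t ≤ 1) :
    FDX.binTail (n+1) t (i+1) ≤ FDX.binTail n t i := by
  rw [binTail_eq (n+1) (i+1) (by omega), binTail_eq n i hi, Lo_pascal]
  have hm := Lo_mono_i n i t h0 h1
  nlinarith [mul_nonneg (sub_nonneg.mpr h1) (sub_nonneg.mpr hm)]

/-! ### The Guo–Romano lemma -/

lemma GR_key (n i : ℕ) (hn : 1 ≤ n) (hi : i ≤ n) (c : ℝ) (hc0 : 0 < c) (hc1 : c ≤ 1) :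
    FDX.binTail n (1 - c^((1:ℝ)/(n:ℝ))) i
      = 1 - c * ∑ j ∈ range i, (n.choose j : ℝ) * (Real.exp (-Real.log c/(n:ℝ)) - 1)^j := by
  have hn0 : (0:ℝ) < n := by exact_mod_cast hn
  set x := -Real.log c with hxdef
  have hq : c^((1:ℝ)/(n:ℝ)) = Real.exp (-(x/n)) := by
    rw [Real.rpow_def_of_pos hc0]
    congr 1
    rw [hxdef]
    field_simp
  set q := Real.exp (-(x/(n:ℝ))) with hqdef
  have hqpos : 0 < q := Real.exp_pos _
  have hqinv : q * Real.exp (x/(n:ℝ)) = 1 := by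
    rw [hqdef, ← Real.exp_add]
    rw [show -(x/(n:ℝ)) + x/(n:ℝ) = 0 by ring, Real.exp_zero]
  have hqn : q^n = c := by
    rw [hqdef, ← Real.exp_nat_mul]
    rw [show (n:ℝ) * -(x/(n:ℝ)) = -x by field_simp]
    rw [hxdef, neg_neg, Real.exp_log hc0]
  rw [hq, binTail_eq n i hi]
  have hLo : Lo n i (1 - q) = c * ∑ j ∈ range i, (n.choose j:ℝ) * (Real.exp (x/(n:ℝ)) - 1)^j := by
    unfold Lo
    rw [Finset.mul_sum]
    refine Finset.sum_congr rfl fun j hj => ?_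
    have hjn : j ≤ n := by have := Finset.mem_range.mp hj; omega
    have h1 : (1:ℝ) - (1 - q) = q := by ring
    rw [h1]
    have h2 : (1 - q) = q * (Real.exp (x/(n:ℝ)) - 1) := by
      linear_combination (-1:ℝ) * hqinv
    have h4 : q^j * q^(n-j) = q^n := by
      rw [← pow_add]
      congr 1
      omega
    calc (n.choose j:ℝ) * (1-q)^j * q^(n-j)
        = (n.choose j:ℝ) * (q * (Real.exp (x/(n:ℝ)) - 1))^j * q^(n-j) := by rw [← h2]
      _ = (n.choose j:ℝ) * (Real.exp (x/(n:ℝ)) - 1)^j * (q^j * q^(n-j)) := by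
          rw [mul_pow]; ring
      _ = (n.choose j:ℝ) * (Real.exp (x/(n:ℝ)) - 1)^j * c := by rw [h4, hqn]
      _ = c * ((n.choose j:ℝ) * (Real.exp (x/(n:ℝ)) - 1)^j) := by ring
  rw [hLo]

lemma GR (N i : ℕ) (hi1 : 1 ≤ i) (hiN : i ≤ N) (c : ℝ) (hc0 : 0 < c) (hc1 : c ≤ 1) :
    FDX.binTail N (1 - c^((1:ℝ)/(N:ℝ))) i ≤ FDX.binTail (N+1) (1 - c^((1:ℝ)/((N:ℝ)+1))) i := by
  have hN1 : (1:ℕ) ≤ N := hi1.trans hiN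
  have hx : 0 ≤ -Real.log c := by
    have := Real.log_nonpos hc0.le hc1
    linarith
  have hcast : ((N+1:ℕ):ℝ) = (N:ℝ)+1 := by push_cast; ring
  have h1 := GR_key N i hN1 hiN c hc0 hc1
  have h2 := GR_key (N+1) i (by omega) (by omega) c hc0 hc1
  rw [hcast] at h2
  rw [h1, h2]
  obtain ⟨k, rfl⟩ : ∃ k, i = k + 1 := ⟨i - 1, by omega⟩
  have hphi := phi_mono N k hN1 (-Real.log c) hx
  nlinarith [hphi, hc0.le]


noncomputable def Pprod (a : ℕ → ℝ) (j : ℕ) : ℝ := ∏ j' ∈ Finset.Icc 1 j, (1 - a j')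


end GRX

/-- Lemma 6.1: For a nonincreasing sequence `a_1 ≥ … ≥ a_m` in `[0,1]` and
`F̃_j = 1 − (∏_{j'=1}^{j}(1 − a_{j'}))^{1/j}`, the quantity
`g(i,ℓ) = P(Bin[m−ℓ+i, F̃_{m−ℓ+i}] ≥ i)` is nonincreasing in `i` and in `ℓ` over
`1 ≤ i ≤ ℓ ≤ m`. -/
theorem stmt_10
    {m : ℕ} (hm : 1 ≤ m) (a : ℕ → ℝ)
    (ha01 : ∀ j, 1 ≤ j → j ≤ m → a j ∈ Set.Icc (0 : ℝ) 1)
    (hamono : ∀ j j', 1 ≤ j → j ≤ j' → j' ≤ m → a j' ≤ a j)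
    (Ft : ℕ → ℝ)
    (hFt : ∀ j, Ft j = 1 - (∏ j' ∈ Finset.Icc 1 j, (1 - a j')) ^ ((1 : ℝ) / j))
    (g : ℕ → ℕ → ℝ)
    (hg : ∀ i ℓ, g i ℓ = FDX.binTail (m - ℓ + i) (Ft (m - ℓ + i)) i) :
    (∀ i ℓ, 1 ≤ i → i + 1 ≤ ℓ → ℓ ≤ m → g (i + 1) ℓ ≤ g i ℓ) ∧
    (∀ i ℓ, 1 ≤ i → i ≤ ℓ → ℓ + 1 ≤ m → g i (ℓ + 1) ≤ g i ℓ) := by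

  have hFt' : ∀ j, Ft j = 1 - (GRX.Pprod a j)^((1:ℝ)/(j:ℝ)) := fun j => by rw [hFt j]; rfl
  have ha0 : ∀ j', 1 ≤ j' → j' ≤ m → 0 ≤ 1 - a j' := by
    intro j' h1 h2
    have h := ha01 j' h1 h2
    rw [Set.mem_Icc] at h
    linarith [h.2]
  have ha1 : ∀ j', 1 ≤ j' → j' ≤ m → 1 - a j' ≤ 1 := by
    intro j' h1 h2
    have h := ha01 j' h1 h2
    rw [Set.mem_Icc] at h
    linarith [h.1]
  have hPnonneg : ∀ j, j ≤ m → 0 ≤ GRX.Pprod a j := by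
    intro j hj
    unfold GRX.Pprod
    apply Finset.prod_nonneg
    intro j' hj'
    obtain ⟨h1, h2⟩ := Finset.mem_Icc.mp hj'
    exact ha0 j' h1 (h2.trans hj)
  have hPle1 : ∀ j, j ≤ m → GRX.Pprod a j ≤ 1 := by
    intro j hj
    unfold GRX.Pprod
    apply Finset.prod_le_one
    · intro j' hj'
      obtain ⟨h1, h2⟩ := Finset.mem_Icc.mp hj'
      exact ha0 j' h1 (h2.trans hj)
    · intro j' hj'
      obtain ⟨h1, h2⟩ := Finset.mem_Icc.mp hj'
      exact ha1 j' h1 (h2.trans hj)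
  have hPsucc : ∀ j, GRX.Pprod a (j+1) = GRX.Pprod a j * (1 - a (j+1)) := by
    intro j
    unfold GRX.Pprod
    exact Finset.prod_Icc_succ_top (by omega) _
  have hFt01 : ∀ j, 1 ≤ j → j ≤ m → 0 ≤ Ft j ∧ Ft j ≤ 1 := by
    intro j h1 h2
    rw [hFt' j]
    constructor
    · have h3 : (GRX.Pprod a j)^((1:ℝ)/(j:ℝ)) ≤ 1 :=
        Real.rpow_le_one (hPnonneg j h2) (hPle1 j h2) (by positivity)
      linarith
    · have h3 : 0 ≤ (GRX.Pprod a j)^((1:ℝ)/(j:ℝ)) := Real.rpow_nonneg (hPnonneg j h2) _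
      linarith
  have hgm : ∀ n, 1 ≤ n → n + 1 ≤ m → (GRX.Pprod a n)^((1:ℝ)/(n:ℝ)) ≤ (GRX.Pprod a (n+1))^((1:ℝ)/((n+1:ℕ):ℝ)) := by
    intro n h1 h2
    have hn0 : (0:ℝ) < (n:ℝ) := by exact_mod_cast h1
    rcases eq_or_lt_of_le (hPnonneg n (by omega)) with h0 | h0
    · rw [← h0, Real.zero_rpow (by positivity)]
      exact Real.rpow_nonneg (hPnonneg (n+1) h2) _
    · have han0 : 0 ≤ 1 - a (n+1) := ha0 (n+1) (by omega) h2
      have hstep : GRX.Pprod a n ≤ (1 - a (n+1))^n := by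
        have hh : GRX.Pprod a n ≤ ∏ _j' ∈ Finset.Icc 1 n, (1 - a (n+1)) := by
          apply Finset.prod_le_prod
          · intro j' hj'
            obtain ⟨hj1, hj2⟩ := Finset.mem_Icc.mp hj'
            exact ha0 j' hj1 (by omega)
          · intro j' hj'
            obtain ⟨hj1, hj2⟩ := Finset.mem_Icc.mp hj'
            have := hamono j' (n+1) hj1 (by omega) h2
            linarith
        refine hh.trans (le_of_eq ?_)
        rw [Finset.prod_const, Nat.card_Icc]
        try congr 1
        try omega
      have hroot : (GRX.Pprod a n)^((1:ℝ)/(n:ℝ)) ≤ 1 - a (n+1) := by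
        have h3 : (GRX.Pprod a n)^((1:ℝ)/(n:ℝ)) ≤ ((1 - a (n+1))^n)^((1:ℝ)/(n:ℝ)) :=
          Real.rpow_le_rpow (hPnonneg n (by omega)) hstep (by positivity)
        have h4 : ((1 - a (n+1))^n)^((1:ℝ)/(n:ℝ)) = 1 - a (n+1) := by
          rw [one_div]
          exact Real.pow_rpow_inv_natCast han0 (by omega)
        rw [h4] at h3
        exact h3
      have h5 : (GRX.Pprod a n)^(1 + (1:ℝ)/(n:ℝ)) ≤ GRX.Pprod a (n+1) := by
        rw [hPsucc n, Real.rpow_add h0, Real.rpow_one]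
        exact mul_le_mul_of_nonneg_left hroot (hPnonneg n (by omega))
      have h7 : ((GRX.Pprod a n)^(1 + (1:ℝ)/(n:ℝ)))^((1:ℝ)/((n+1:ℕ):ℝ)) = (GRX.Pprod a n)^((1:ℝ)/(n:ℝ)) := by
        rw [← Real.rpow_mul (hPnonneg n (by omega))]
        congr 1
        push_cast
        have hne : (n:ℝ) ≠ 0 := by positivity
        have hne1 : (n:ℝ)+1 ≠ 0 := by positivity
        field_simp
      calc (GRX.Pprod a n)^((1:ℝ)/(n:ℝ)) = ((GRX.Pprod a n)^(1 + (1:ℝ)/(n:ℝ)))^((1:ℝ)/((n+1:ℕ):ℝ)) := h7.symm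
        _ ≤ (GRX.Pprod a (n+1))^((1:ℝ)/((n+1:ℕ):ℝ)) :=
            Real.rpow_le_rpow (Real.rpow_nonneg h0.le _) h5 (by positivity)
  have hFtstep : ∀ n, 1 ≤ n → n + 1 ≤ m → Ft (n+1) ≤ Ft n := by
    intro n h1 h2
    rw [hFt', hFt']
    have := hgm n h1 h2
    push_cast at this ⊢
    linarith
  constructor
  · intro i ℓ hi hil hlm
    rw [hg, hg]
    rw [show m - ℓ + (i+1) = (m - ℓ + i) + 1 by omega]
    set n := m - ℓ + i with hndef
    have hni : i ≤ n := by omega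
    have h1n : 1 ≤ n := by omega
    have hnm : n + 1 ≤ m := by omega
    have hb1 := hFt01 (n+1) (by omega) hnm
    have hb0 := hFt01 n (by omega) (by omega)
    calc FDX.binTail (n+1) (Ft (n+1)) (i+1)
        ≤ FDX.binTail (n+1) (Ft n) (i+1) :=
          GRX.binTail_mono_t (n+1) (i+1) (by omega) hb1.1 (hFtstep n h1n hnm) hb0.2
      _ ≤ FDX.binTail n (Ft n) i := GRX.binTail_step n i hni hb0.1 hb0.2
  · intro i ℓ hi hil hlm
    rw [hg, hg]
    rw [show m - ℓ + i = (m - (ℓ+1) + i) + 1 by omega]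
    set N := m - (ℓ+1) + i with hNdef
    have hNi : i ≤ N := by omega
    have hN1 : 1 ≤ N := by omega
    have hNm : N + 1 ≤ m := by omega
    rcases eq_or_lt_of_le (hPnonneg N (by omega)) with h0 | h0
    · have hFtN : Ft N = 1 := by
        rw [hFt', ← h0, Real.zero_rpow (by positivity)]
        ring
      have hPN1 : GRX.Pprod a (N+1) = 0 := by rw [hPsucc, ← h0, zero_mul]
      have hFtN1 : Ft (N+1) = 1 := by
        rw [hFt', hPN1, Real.zero_rpow (by positivity)]
        ring
      rw [hFtN, hFtN1, GRX.binTail_one N i hNi, GRX.binTail_one (N+1) i (by omega)]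
    · have hc1 : GRX.Pprod a N ≤ 1 := hPle1 N (by omega)
      have hFtN : FDX.binTail N (Ft N) i = FDX.binTail N (1 - (GRX.Pprod a N)^((1:ℝ)/(N:ℝ))) i := by
        rw [hFt']
      rw [hFtN]
      refine (GRX.GR N i hi hNi (GRX.Pprod a N) h0 hc1).trans ?_
      have hcast : ((N+1:ℕ):ℝ) = (N:ℝ)+1 := by push_cast; ring
      apply GRX.binTail_mono_t (N+1) i (by omega)
      · have h3 : (GRX.Pprod a N)^((1:ℝ)/((N:ℝ)+1)) ≤ 1 :=
          Real.rpow_le_one (hPnonneg N (by omega)) hc1 (by positivity)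
        linarith
      · rw [hFt']
        have hle : GRX.Pprod a (N+1) ≤ GRX.Pprod a N := by
          rw [hPsucc]
          have hb := ha0 (N+1) (by omega) hNm
          have hb1 := ha1 (N+1) (by omega) hNm
          nlinarith [hPnonneg N (by omega)]
        have hmono : (GRX.Pprod a (N+1))^((1:ℝ)/((N+1:ℕ):ℝ)) ≤ (GRX.Pprod a N)^((1:ℝ)/((N:ℝ)+1)) := by
          rw [hcast]
          exact Real.rpow_le_rpow (hPnonneg (N+1) hNm) hle (by positivity)
        push_cast at hmono ⊢
        linarith
      · exact (hFt01 (N+1) (by omega) hNm).2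
end

section
/- (Binomial merging inequality.) Let n_1, n_2 ∈ ℕ with n_1 ≥ 1, and let p_1, p_2, p ∈ [0,1] satisfy (1 − p)^{n_1 + n_2} = (1 − p_1)^{n_1} (1 − p_2)^{n_2}. Then a Bin[n_1, p_1] random variable is stochastically smaller than a Bin[n_1 + n_2, p] random variable: for every k ∈ ℕ, P( Bin[n_1, p_1] ≥ k ) ≤ P( Bin[n_1 + n_2, p] ≥ k ). -/
open MeasureTheory ProbabilityTheory Finset

namespace BinMerge

/-- Tail of a Poisson binomial given by a list of success probabilities. -/
noncomputable def T : List ℝ → ℕ → ℝ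
  | [], 0 => 1
  | [], _ + 1 => 0
  | _ :: _, 0 => 1
  | a :: l, k + 1 => a * T l k + (1 - a) * T l (k + 1)

lemma T_zero (l : List ℝ) : T l 0 = 1 := by cases l <;> rfl

lemma T_nil_succ (k : ℕ) : T [] (k + 1) = 0 := rfl

lemma T_cons_succ (a : ℝ) (l : List ℝ) (k : ℕ) :
    T (a :: l) (k + 1) = a * T l k + (1 - a) * T l (k + 1) := rfl

lemma T_nonneg (l : List ℝ) (hl : ∀ x ∈ l, 0 ≤ x ∧ x ≤ 1) (k : ℕ) : 0 ≤ T l k := by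
  induction l generalizing k with
  | nil => cases k <;> simp [T_zero, T_nil_succ]
  | cons a l ih =>
    cases k with
    | zero => simp [T_zero]
    | succ k =>
      have ha := hl a (by simp)
      have hl' : ∀ x ∈ l, 0 ≤ x ∧ x ≤ 1 := fun x hx => hl x (by simp [hx])
      have h1 := ih hl' k
      have h2 := ih hl' (k + 1)
      rw [T_cons_succ]
      nlinarith [ha.1, ha.2]

lemma T_le_one (l : List ℝ) (hl : ∀ x ∈ l, 0 ≤ x ∧ x ≤ 1) (k : ℕ) : T l k ≤ 1 := by
  induction l generalizing k with
  | nil => cases k <;> simp [T_zero, T_nil_succ]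
  | cons a l ih =>
    cases k with
    | zero => simp [T_zero]
    | succ k =>
      have ha := hl a (by simp)
      have hl' : ∀ x ∈ l, 0 ≤ x ∧ x ≤ 1 := fun x hx => hl x (by simp [hx])
      have h1 := ih hl' k
      have h2 := ih hl' (k + 1)
      have h3 := T_nonneg l hl' k
      have h4 := T_nonneg l hl' (k + 1)
      rw [T_cons_succ]
      nlinarith [ha.1, ha.2]

lemma T_antitone (l : List ℝ) (hl : ∀ x ∈ l, 0 ≤ x ∧ x ≤ 1) (k : ℕ) :
    T l (k + 1) ≤ T l k := by
  induction l generalizing k with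
  | nil => cases k <;> simp [T_zero, T_nil_succ]
  | cons a l ih =>
    have ha := hl a (by simp)
    have hl' : ∀ x ∈ l, 0 ≤ x ∧ x ≤ 1 := fun x hx => hl x (by simp [hx])
    cases k with
    | zero =>
      rw [T_cons_succ, T_zero, T_zero]
      have h1 := T_le_one l hl' 1
      nlinarith [ha.1, ha.2]
    | succ k =>
      rw [T_cons_succ, T_cons_succ]
      have h1 := ih hl' k
      have h2 := ih hl' (k + 1)
      nlinarith [ha.1, ha.2]

lemma T_eq_zero (l : List ℝ) (k : ℕ) (hk : l.length < k) : T l k = 0 := by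
  induction l generalizing k with
  | nil =>
    cases k with
    | zero => omega
    | succ k => rfl
  | cons a l ih =>
    cases k with
    | zero => simp at hk
    | succ k =>
      have h1 : l.length < k := by simp at hk; omega
      rw [T_cons_succ, ih k h1, ih (k + 1) (by omega)]
      ring

lemma T_swap (x y : ℝ) (l : List ℝ) (k : ℕ) : T (y :: x :: l) k = T (x :: y :: l) k := by
  cases k with
  | zero => rw [T_zero, T_zero]
  | succ k =>
    cases k with
    | zero =>
      simp only [T_cons_succ, T_zero]
      ring
    | succ k =>
      simp only [T_cons_succ]
      ring

lemma T_perm {l l' : List ℝ} (h : l.Perm l') : ∀ k, T l k = T l' k := by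
  induction h with
  | nil => intro k; rfl
  | cons x h ih =>
    intro k
    cases k with
    | zero => rw [T_zero, T_zero]
    | succ k => rw [T_cons_succ, T_cons_succ, ih, ih]
  | swap x y l => intro k; exact T_swap x y l k
  | trans h1 h2 ih1 ih2 => intro k; rw [ih1, ih2]

lemma T_cons_ge (a : ℝ) (ha : 0 ≤ a) (l : List ℝ) (hl : ∀ x ∈ l, 0 ≤ x ∧ x ≤ 1) (k : ℕ) :
    T l k ≤ T (a :: l) k := by
  cases k with
  | zero => rw [T_zero, T_zero]
  | succ k =>
    rw [T_cons_succ]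
    have h1 := T_antitone l hl k
    nlinarith

/-- Two-point move: replacing the pair `(a,b)` by `(a',b')` with the same failure product
and a larger success product increases the tail. -/
lemma T_two (a b a' b' : ℝ) (l : List ℝ) (hl : ∀ x ∈ l, 0 ≤ x ∧ x ≤ 1)
    (hc : (1 - a) * (1 - b) = (1 - a') * (1 - b')) (hab : a * b ≤ a' * b') (k : ℕ) :
    T (a :: b :: l) k ≤ T (a' :: b' :: l) k := by
  cases k with
  | zero => rw [T_zero, T_zero]
  | succ k =>
    cases k with
    | zero =>
      apply le_of_eq
      simp only [T_cons_succ, T_zero]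
      linear_combination (T l (0 + 1) - 1) * hc
    | succ k =>
      have h1 := T_antitone l hl k
      have key : T (a' :: b' :: l) (k + 1 + 1) - T (a :: b :: l) (k + 1 + 1)
          = (a' * b' - a * b) * (T l k - T l (k + 1)) := by
        simp only [T_cons_succ]
        linear_combination (T l (k + 1) - T l (k + 1 + 1)) * hc
      have h2 : 0 ≤ (a' * b' - a * b) * (T l k - T l (k + 1)) :=
        mul_nonneg (by linarith) (by linarith)
      linarith [key]

lemma list_prod_lt {r : ℝ} (hr : 0 < r) :
    ∀ l : List ℝ, l ≠ [] → (∀ x ∈ l, 0 ≤ x ∧ x < r) → l.prod < r ^ l.length := by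
  intro l
  induction l with
  | nil => intro h; exact absurd rfl h
  | cons a l ih =>
    intro _ hx
    have ha := hx a (by simp)
    have hl' : ∀ x ∈ l, 0 ≤ x ∧ x < r := fun x h => hx x (by simp [h])
    rcases List.eq_nil_or_concat l with h | h
    · subst h; simpa using ha.2
    · have hne : l ≠ [] := by rcases h with ⟨L, b, rfl⟩; simp
      have h1 := ih hne hl'
      have h2 : 0 ≤ l.prod := List.prod_nonneg (fun x h => (hl' x h).1)
      have h3 : (0:ℝ) < r ^ l.length := pow_pos hr _
      simp only [List.prod_cons, List.length_cons, pow_succ]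
      calc a * l.prod ≤ a * r ^ l.length := by nlinarith
        _ < r * r ^ l.length := by nlinarith
        _ = r ^ l.length * r := by ring

lemma list_prod_gt {r : ℝ} (hr : 0 < r) :
    ∀ l : List ℝ, l ≠ [] → (∀ x ∈ l, r < x) → r ^ l.length < l.prod := by
  intro l
  induction l with
  | nil => intro h; exact absurd rfl h
  | cons a l ih =>
    intro _ hx
    have ha := hx a (by simp)
    have hl' : ∀ x ∈ l, r < x := fun x h => hx x (by simp [h])
    rcases List.eq_nil_or_concat l with h | h
    · subst h; simpa using ha
    · have hne : l ≠ [] := by rcases h with ⟨L, b, rfl⟩; simp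
      have h1 := ih hne hl'
      have h3 : (0:ℝ) < r ^ l.length := pow_pos hr _
      simp only [List.prod_cons, List.length_cons, pow_succ]
      nlinarith

lemma T_replicate_one (m : ℕ) : ∀ k, k ≤ m → T (List.replicate m (1:ℝ)) k = 1 := by
  induction m with
  | zero => intro k hk; interval_cases k; rfl
  | succ m ih =>
    intro k hk
    cases k with
    | zero => rw [T_zero]
    | succ k =>
      rw [List.replicate_succ, T_cons_succ, ih k (by omega)]
      ring

/-- Balancing: a Poisson binomial with failure product `(1-p)^n` is dominated by `Bin(n,p)`. -/
lemma T_balance (p : ℝ) (hp0 : 0 ≤ p) (hp1 : p ≤ 1) :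
    ∀ n (l : List ℝ), l.length = n → (∀ x ∈ l, 0 ≤ x ∧ x ≤ 1) →
      (l.map (fun x => 1 - x)).prod = (1 - p) ^ n →
      ∀ k, T l k ≤ T (List.replicate n p) k := by
  intro n
  induction n with
  | zero =>
    intro l hlen _ _ k
    rw [List.length_eq_zero_iff.mp hlen]
    exact le_refl _
  | succ n ih =>
    intro l hlen hl hprod k
    rcases eq_or_lt_of_le (sub_nonneg.mpr hp1 : (0:ℝ) ≤ 1 - p) with hr | hr
    · -- p = 1
      have hp' : p = 1 := by linarith
      subst hp'
      by_cases hk : k ≤ n + 1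
      · rw [T_replicate_one (n + 1) k hk]
        exact T_le_one l hl k
      · rw [T_eq_zero l k (by omega), T_eq_zero _ k (by simp; omega)]
    · -- 0 < 1 - p
      have hlne : l ≠ [] := by
        intro h; rw [h] at hlen; simp at hlen
      have hexa : ∃ a ∈ l, a ≤ p := by
        by_contra h
        push_neg at h
        have hmap : ∀ y ∈ l.map (fun x => 1 - x), 0 ≤ y ∧ y < 1 - p := by
          intro y hy
          simp only [List.mem_map] at hy
          obtain ⟨x, hx, rfl⟩ := hy
          exact ⟨by linarith [(hl x hx).2], by linarith [h x hx]⟩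
        have := list_prod_lt hr _ (by simpa using hlne) hmap
        rw [hprod, List.length_map, hlen] at this
        exact lt_irrefl _ this
      have hexb : ∃ b ∈ l, p ≤ b := by
        by_contra h
        push_neg at h
        have hmap : ∀ y ∈ l.map (fun x => 1 - x), 1 - p < y := by
          intro y hy
          simp only [List.mem_map] at hy
          obtain ⟨x, hx, rfl⟩ := hy
          linarith [h x hx]
        have := list_prod_gt hr _ (by simpa using hlne) hmap
        rw [hprod, List.length_map, hlen] at this
        exact lt_irrefl _ this
      by_cases hmem : p ∈ l
      · -- pull out one coordinate equal to p
        have hperm : l.Perm (p :: l.erase p) := List.perm_cons_erase hmem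
        have hlenr : (l.erase p).length = n := by
          have := List.length_erase_add_one hmem
          omega
        have hrest : ∀ x ∈ l.erase p, 0 ≤ x ∧ x ≤ 1 :=
          fun x hx => hl x (List.mem_of_mem_erase hx)
        have hprodr : ((l.erase p).map (fun x => 1 - x)).prod = (1 - p) ^ n := by
          have h1 : (l.map (fun x => 1 - x)).prod
              = ((p :: l.erase p).map (fun x => 1 - x)).prod :=
            (hperm.map _).prod_eq
          rw [hprod] at h1
          simp only [List.map_cons, List.prod_cons] at h1
          have h2 : (1 - p) * ((l.erase p).map (fun x => 1 - x)).prod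
              = (1 - p) * (1 - p) ^ n := by rw [← h1, pow_succ']
          exact mul_left_cancel₀ (by linarith : (1:ℝ) - p ≠ 0) h2
        rw [T_perm hperm k, List.replicate_succ]
        cases k with
        | zero => rw [T_zero, T_zero]
        | succ k =>
          rw [T_cons_succ, T_cons_succ]
          have h1 := ih (l.erase p) hlenr hrest hprodr k
          have h2 := ih (l.erase p) hlenr hrest hprodr (k + 1)
          have hp2 : (0:ℝ) ≤ 1 - p := by linarith
          nlinarith
      · -- no coordinate equals p: balance the extremes
        obtain ⟨a, ha_mem, ha_le⟩ := hexa
        obtain ⟨b, hb_mem, hb_ge⟩ := hexb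
        have ha_lt : a < p := lt_of_le_of_ne ha_le (fun h => hmem (h ▸ ha_mem))
        have hb_gt : p < b := lt_of_le_of_ne hb_ge (fun h => hmem (h ▸ hb_mem))
        have hab : b ≠ a := by intro h; rw [h] at hb_gt; linarith
        have hb_mem' : b ∈ l.erase a := (List.mem_erase_of_ne hab).mpr hb_mem
        set rest := (l.erase a).erase b with hrest_def
        have hperm : l.Perm (a :: b :: rest) :=
          (List.perm_cons_erase ha_mem).trans ((List.perm_cons_erase hb_mem').cons a)
        have hlen2 : l.length = rest.length + 2 := by
          have := hperm.length_eq; simpa using this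
        have hn : n = rest.length + 1 := by omega
        have ha01 := hl a ha_mem
        have hb01 := hl b hb_mem
        have hrest : ∀ x ∈ rest, 0 ≤ x ∧ x ≤ 1 :=
          fun x hx => hl x (List.mem_of_mem_erase (List.mem_of_mem_erase hx))
        set r : ℝ := 1 - p with hr_def
        set c : ℝ := (1 - a) * (1 - b) with hc_def
        set b' : ℝ := 1 - c / r with hb'_def
        have hra : r ≤ 1 - a := by simp [hr_def]; linarith
        have hrb : 1 - b ≤ r := by simp [hr_def]; linarith
        have hb_le1 := hb01.2
        have hprod2 : c * ((rest.map (fun x => 1 - x)).prod) = r ^ (n + 1) := by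
          have h1 : (l.map (fun x => 1 - x)).prod
              = ((a :: b :: rest).map (fun x => 1 - x)).prod := (hperm.map _).prod_eq
          rw [hprod] at h1
          simp only [List.map_cons, List.prod_cons] at h1
          rw [h1, hc_def]; ring
        have hc0 : c ≠ 0 := by
          intro h
          rw [h, zero_mul] at hprod2
          exact absurd hprod2.symm (ne_of_gt (pow_pos hr _))
        have hcpos : 0 < c := by
          rcases lt_or_eq_of_le (mul_nonneg (by linarith [ha01.2] : (0:ℝ) ≤ 1 - a)
            (by linarith [hb01.2] : (0:ℝ) ≤ 1 - b)) with h | h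
          · exact h
          · exact absurd h.symm hc0
        have hcr : c ≤ r := by nlinarith [ha01.1]
        have hb'0 : 0 ≤ b' := by
          rw [hb'_def]
          have : c / r ≤ 1 := (div_le_one hr).mpr hcr
          linarith
        have hb'1 : b' ≤ 1 := by
          rw [hb'_def]
          have : 0 ≤ c / r := div_nonneg (le_of_lt hcpos) (le_of_lt hr)
          linarith
        have hcc : (1 - a) * (1 - b) = (1 - p) * (1 - b') := by
          rw [hb'_def]
          field_simp
          rw [hc_def, hr_def]; ring
        have hmul : a * b ≤ p * b' := by
          have key : r * (p * b' - a * b) = (1 - a - r) * (r - (1 - b)) := by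
            rw [hb'_def, hc_def]
            field_simp
            ring
          have h1 : 0 ≤ (1 - a - r) * (r - (1 - b)) :=
            mul_nonneg (by linarith) (by linarith)
          nlinarith [key, h1, hr]
        have hprodr : ((b' :: rest).map (fun x => 1 - x)).prod = r ^ n := by
          simp only [List.map_cons, List.prod_cons]
          have hbp : (1 : ℝ) - b' = c / r := by rw [hb'_def]; ring
          rw [hbp, div_mul_eq_mul_div, hprod2, pow_succ, mul_div_assoc,
            div_self (ne_of_gt hr), mul_one]
        have hlenr : (b' :: rest).length = n := by simp [hn]
        have hgood : ∀ x ∈ b' :: rest, 0 ≤ x ∧ x ≤ 1 := by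
          intro x hx
          rcases List.mem_cons.mp hx with h | h
          · exact h ▸ ⟨hb'0, hb'1⟩
          · exact hrest x h
        calc T l k = T (a :: b :: rest) k := T_perm hperm k
          _ ≤ T (p :: b' :: rest) k := T_two a b p b' rest hrest hcc hmul k
          _ ≤ T (List.replicate (n + 1) p) k := by
              rw [List.replicate_succ]
              cases k with
              | zero => rw [T_zero, T_zero]
              | succ k =>
                rw [T_cons_succ, T_cons_succ]
                have h1 := ih (b' :: rest) hlenr hgood (by rw [hprodr]) k
                have h2 := ih (b' :: rest) hlenr hgood (by rw [hprodr]) (k + 1)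
                have hp2 : (0:ℝ) ≤ 1 - p := by rw [← hr_def]; linarith
                exact add_le_add (mul_le_mul_of_nonneg_left h1 hp0)
                  (mul_le_mul_of_nonneg_left h2 hp2)

lemma binTail_zero (n : ℕ) (p : ℝ) : FDX.binTail n p 0 = 1 := by
  unfold FDX.binTail
  have h : Finset.Icc 0 n = Finset.range (n + 1) := by
    ext x; simp [Nat.lt_succ_iff]
  rw [h]
  calc (∑ j ∈ Finset.range (n + 1), (n.choose j : ℝ) * p ^ j * (1 - p) ^ (n - j))
      = ∑ j ∈ Finset.range (n + 1), p ^ j * (1 - p) ^ (n - j) * (n.choose j : ℝ) := by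
        apply Finset.sum_congr rfl; intros; ring
    _ = (p + (1 - p)) ^ n := (add_pow p (1 - p) n).symm
    _ = 1 := by norm_num

lemma binTail_succ (n : ℕ) (p : ℝ) (k : ℕ) :
    FDX.binTail (n + 1) p (k + 1)
      = p * FDX.binTail n p k + (1 - p) * FDX.binTail n p (k + 1) := by
  by_cases hk : k ≤ n
  · unfold FDX.binTail
    have hmap : (Finset.Icc k n).map (addRightEmbedding 1) = Finset.Icc (k + 1) (n + 1) :=
      Finset.map_add_right_Icc k n 1
    have hL : ∑ j ∈ Finset.Icc (k + 1) (n + 1),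
        ((n + 1).choose j : ℝ) * p ^ j * (1 - p) ^ (n + 1 - j)
        = ∑ i ∈ Finset.Icc k n,
            ((n + 1).choose (i + 1) : ℝ) * p ^ (i + 1) * (1 - p) ^ (n - i) := by
      rw [← hmap, Finset.sum_map]
      apply Finset.sum_congr rfl
      intro i hi
      simp only [addRightEmbedding_apply]
      congr 2
      omega
    rw [hL]
    have hsplit : ∀ i ∈ Finset.Icc k n,
        ((n + 1).choose (i + 1) : ℝ) * p ^ (i + 1) * (1 - p) ^ (n - i)
        = p * ((n.choose i : ℝ) * p ^ i * (1 - p) ^ (n - i))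
          + (n.choose (i + 1) : ℝ) * p ^ (i + 1) * (1 - p) ^ (n - i) := by
      intro i _
      rw [Nat.choose_succ_succ n i]
      push_cast
      ring
    rw [Finset.sum_congr rfl hsplit, Finset.sum_add_distrib, ← Finset.mul_sum]
    congr 1
    -- second sum equals (1-p) * binTail n p (k+1)
    have h2 : ∑ i ∈ Finset.Icc k n, (n.choose (i + 1) : ℝ) * p ^ (i + 1) * (1 - p) ^ (n - i)
        = ∑ j ∈ Finset.Icc (k + 1) (n + 1), (n.choose j : ℝ) * p ^ j * (1 - p) ^ (n + 1 - j) := by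
      rw [← hmap, Finset.sum_map]
      apply Finset.sum_congr rfl
      intro i hi
      simp only [addRightEmbedding_apply]
      congr 2
      omega
    rw [h2]
    have hins : Finset.Icc (k + 1) (n + 1) = insert (n + 1) (Finset.Icc (k + 1) n) := by
      ext x; simp only [Finset.mem_Icc, Finset.mem_insert]; omega
    rw [hins, Finset.sum_insert (by simp)]
    rw [Nat.choose_eq_zero_of_lt (by omega)]
    simp only [Nat.cast_zero, zero_mul, zero_add]
    rw [Finset.mul_sum]
    apply Finset.sum_congr rfl
    intro j hj
    simp only [Finset.mem_Icc] at hj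
    have : n + 1 - j = (n - j) + 1 := by omega
    rw [this, pow_succ]
    ring
  · unfold FDX.binTail
    rw [Finset.Icc_eq_empty (by omega : ¬ k + 1 ≤ n + 1),
      Finset.Icc_eq_empty (by omega : ¬ k ≤ n),
      Finset.Icc_eq_empty (by omega : ¬ k + 1 ≤ n)]
    simp

lemma T_replicate (n : ℕ) (p : ℝ) : ∀ k, T (List.replicate n p) k = FDX.binTail n p k := by
  induction n with
  | zero =>
    intro k
    cases k with
    | zero => simp [T_zero, FDX.binTail]
    | succ k =>
      simp only [List.replicate_zero]
      rw [T_nil_succ]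
      unfold FDX.binTail
      rw [Finset.Icc_eq_empty (by omega)]
      simp
  | succ n ih =>
    intro k
    cases k with
    | zero => rw [T_zero, binTail_zero]
    | succ k =>
      rw [List.replicate_succ, T_cons_succ, ih, ih, binTail_succ]

lemma T_append_replicate (q : ℝ) (hq : 0 ≤ q) (l : List ℝ)
    (hl : ∀ x ∈ l, 0 ≤ x ∧ x ≤ 1) (hq1 : q ≤ 1) :
    ∀ m k, T l k ≤ T (List.replicate m q ++ l) k := by
  intro m
  induction m with
  | zero => intro k; simp
  | succ m ih =>
    intro k
    rw [List.replicate_succ, List.cons_append]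
    refine le_trans (ih k) (T_cons_ge q hq _ ?_ k)
    intro x hx
    rcases List.mem_append.mp hx with h | h
    · rw [List.eq_of_mem_replicate h]; exact ⟨hq, hq1⟩
    · exact hl x h

end BinMerge

/-- Binomial merging inequality: if `n₁ ≥ 1` and
`(1−p)^{n₁+n₂} = (1−p₁)^{n₁} (1−p₂)^{n₂}` with `p₁, p₂, p ∈ [0,1]`, then
`P(Bin[n₁,p₁] ≥ k) ≤ P(Bin[n₁+n₂,p] ≥ k)` for every `k`. -/
theorem stmt_11
    (n₁ n₂ : ℕ) (hn₁ : 1 ≤ n₁) (p₁ p₂ p : ℝ)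
    (hp₁ : p₁ ∈ Set.Icc (0 : ℝ) 1) (hp₂ : p₂ ∈ Set.Icc (0 : ℝ) 1)
    (hp : p ∈ Set.Icc (0 : ℝ) 1)
    (hprod : (1 - p) ^ (n₁ + n₂) = (1 - p₁) ^ n₁ * (1 - p₂) ^ n₂) :
    ∀ k : ℕ, FDX.binTail n₁ p₁ k ≤ FDX.binTail (n₁ + n₂) p k := by
  intro k
  obtain ⟨hp₁0, hp₁1⟩ := hp₁
  obtain ⟨hp₂0, hp₂1⟩ := hp₂
  obtain ⟨hp0, hp1⟩ := hp
  set l₀ : List ℝ := List.replicate n₂ p₂ ++ List.replicate n₁ p₁ with hl₀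
  have hgood : ∀ x ∈ l₀, 0 ≤ x ∧ x ≤ 1 := by
    intro x hx
    rcases List.mem_append.mp hx with h | h
    · rw [List.eq_of_mem_replicate h]; exact ⟨hp₂0, hp₂1⟩
    · rw [List.eq_of_mem_replicate h]; exact ⟨hp₁0, hp₁1⟩
  have hgood₁ : ∀ x ∈ List.replicate n₁ p₁, 0 ≤ x ∧ x ≤ 1 := by
    intro x hx
    rw [List.eq_of_mem_replicate hx]; exact ⟨hp₁0, hp₁1⟩
  have step1 : BinMerge.T (List.replicate n₁ p₁) k ≤ BinMerge.T l₀ k :=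
    BinMerge.T_append_replicate p₂ hp₂0 _ hgood₁ hp₂1 n₂ k
  have hlen : l₀.length = n₁ + n₂ := by simp [hl₀, Nat.add_comm]
  have hprodl : (l₀.map (fun x => 1 - x)).prod = (1 - p) ^ (n₁ + n₂) := by
    rw [hl₀, List.map_append, List.prod_append, List.map_replicate, List.map_replicate,
      List.prod_replicate, List.prod_replicate, hprod, mul_comm]
  have step2 : BinMerge.T l₀ k ≤ BinMerge.T (List.replicate (n₁ + n₂) p) k :=
    BinMerge.T_balance p hp0 hp1 (n₁ + n₂) l₀ hlen hgood hprodl k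
  calc FDX.binTail n₁ p₁ k = BinMerge.T (List.replicate n₁ p₁) k :=
        (BinMerge.T_replicate n₁ p₁ k).symm
    _ ≤ BinMerge.T (List.replicate (n₁ + n₂) p) k := le_trans step1 step2
    _ = FDX.binTail (n₁ + n₂) p k := BinMerge.T_replicate (n₁ + n₂) p k
end

section
/- (Proposition 2.1, computational shortcut for step-down procedures.) Let m ≥ 1, ζ > 0, A ⊆ [0,1], and let ξ_1,…,ξ_m : [0,1] → [0,∞) satisfy: each ξ_ℓ is nondecreasing, and ξ_{ℓ+1}(t) ≤ ξ_ℓ(t) for all t ∈ [0,1] and 1 ≤ ℓ ≤ m−1. Assume that for each ℓ the set {t ∈ A : ξ_ℓ(t) ≤ ζ} is nonempty and admits a greatest element, and define τ_ℓ as this greatest element (so (τ_ℓ) is nondecreasing). Let p_1,…,p_m be p-values all belonging to A, sorted as p_{σ(1)} ≤ … ≤ p_{σ(m)}, and let R be the step-down rejection set with critical values (τ_ℓ). Define adjusted p-values p̃_i = max{ ξ_ℓ(p_{σ(ℓ)}) : 1 ≤ ℓ ≤ m, p_{σ(ℓ)} ≤ p_i } for each i (the maximizing set contains σ^{-1}(i),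 hence is nonempty). Then R = { i ∈ {1,…,m} : p̃_i ≤ ζ }. -/
open MeasureTheory ProbabilityTheory Finset

private theorem aux_cardlt (m n : ℕ) (h : n ≤ m) :
    (Finset.univ.filter fun k : Fin m => (k:ℕ) < n).card = n := by
  rw [show (Finset.univ.filter fun k : Fin m => (k:ℕ) < n)
      = Finset.map (Fin.castLEEmb h) Finset.univ by
    ext k
    simp only [Finset.mem_filter, Finset.mem_univ, true_and, Finset.mem_map]
    constructor
    · intro hk; exact ⟨⟨k, hk⟩, rfl⟩
    · rintro ⟨j, rfl⟩; exact j.is_lt]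
  simp

/-- Proposition 2.1, computational shortcut: for a transformation function
family `ξ_ℓ` (each nondecreasing on `[0,1]`, with values in `[0,∞)`, and nonincreasing in `ℓ`)
whose level sets `{t ∈ A : ξ_ℓ(t) ≤ ζ}` are nonempty and admit greatest elements `τ_ℓ`,
the step-down rejection set with critical values `(τ_ℓ)` is
`{i : p̃_i ≤ ζ}` where `p̃_i = max{ξ_ℓ(p_{σ(ℓ)}) : 1 ≤ ℓ ≤ m, p_{σ(ℓ)} ≤ p_i}`
(positions `k : Fin m` encode `ℓ = k + 1`). -/
theorem stmt_16
    {m : ℕ} (hm : 1 ≤ m) {ζ : ℝ} (hζ : 0 < ζ)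
    (A : Set ℝ) (hA : A ⊆ Set.Icc 0 1)
    (ξ : ℕ → ℝ → ℝ)
    (hξ0 : ∀ ℓ ∈ Finset.Icc 1 m, ∀ t ∈ Set.Icc (0 : ℝ) 1, 0 ≤ ξ ℓ t)
    (hξmono : ∀ ℓ ∈ Finset.Icc 1 m, MonotoneOn (ξ ℓ) (Set.Icc (0 : ℝ) 1))
    (hξdec : ∀ ℓ, 1 ≤ ℓ → ℓ + 1 ≤ m → ∀ t ∈ Set.Icc (0 : ℝ) 1, ξ (ℓ + 1) t ≤ ξ ℓ t)
    (τ : ℕ → ℝ)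
    (hτ : ∀ ℓ ∈ Finset.Icc 1 m, IsGreatest {t | t ∈ A ∧ ξ ℓ t ≤ ζ} (τ ℓ))
    (p : Fin m → ℝ) (hp : ∀ i, p i ∈ A)
    (σ : Equiv.Perm (Fin m)) (hσ : Monotone (fun k => p (σ k))) :
    FDX.sdReject p τ = Finset.univ.filter (fun i =>
      (Finset.univ.filter (fun k : Fin m => p (σ k) ≤ p i)).sup'
        ⟨σ.symm i, by simp⟩ (fun k => ξ ((k : ℕ) + 1) (p (σ k))) ≤ ζ) := by
  have hpIcc : ∀ i, p i ∈ Set.Icc (0:ℝ) 1 := fun i => hA (hp i)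
  have hτmem : ∀ ℓ, 1 ≤ ℓ → ℓ ≤ m → τ ℓ ∈ A ∧ ξ ℓ (τ ℓ) ≤ ζ := fun ℓ h1 h2 =>
    (hτ ℓ (Finset.mem_Icc.mpr ⟨h1, h2⟩)).1
  have hτIcc : ∀ ℓ, 1 ≤ ℓ → ℓ ≤ m → τ ℓ ∈ Set.Icc (0:ℝ) 1 := fun ℓ h1 h2 =>
    hA (hτmem ℓ h1 h2).1
  have hiff : ∀ ℓ, 1 ≤ ℓ → ℓ ≤ m → ∀ t ∈ A, (t ≤ τ ℓ ↔ ξ ℓ t ≤ ζ) := by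
    intro ℓ h1 h2 t ht
    constructor
    · intro hle
      calc ξ ℓ t ≤ ξ ℓ (τ ℓ) :=
            hξmono ℓ (Finset.mem_Icc.mpr ⟨h1, h2⟩) (hA ht) (hτIcc ℓ h1 h2) hle
        _ ≤ ζ := (hτmem ℓ h1 h2).2
    · intro hξt
      exact (hτ ℓ (Finset.mem_Icc.mpr ⟨h1, h2⟩)).2 ⟨ht, hξt⟩
  have hξanti : ∀ a b, 1 ≤ a → a ≤ b → b ≤ m → ∀ t ∈ Set.Icc (0:ℝ) 1, ξ b t ≤ ξ a t := by
    intro a b h1 hab hbm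
    induction b with
    | zero => omega
    | succ n ih =>
      intro t ht
      rcases Nat.lt_or_ge a (n + 1) with h | h
      · calc ξ (n + 1) t ≤ ξ n t := hξdec n (by omega) hbm t ht
          _ ≤ ξ a t := ih (by omega) (by omega) t ht
      · have : a = n + 1 := by omega
        subst this; exact le_rfl
  have hτmono : ∀ a b, 1 ≤ a → a ≤ b → b ≤ m → τ a ≤ τ b := by
    intro a b h1 hab hbm
    refine (hτ b (Finset.mem_Icc.mpr ⟨by omega, hbm⟩)).2 ⟨(hτmem a h1 (by omega)).1, ?_⟩
    calc ξ b (τ a) ≤ ξ a (τ a) := hξanti a b h1 hab hbm _ (hτIcc a h1 (by omega))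
      _ ≤ ζ := (hτmem a h1 (by omega)).2
  have hcount : ∀ (ℓ' : ℕ) (h1 : 1 ≤ ℓ') (h2 : ℓ' ≤ m) (t : ℝ),
      (ℓ' ≤ FDX.countLe p t ↔ p (σ ⟨ℓ' - 1, by omega⟩) ≤ t) := by
    intro ℓ' h1 h2 t
    have hcard : FDX.countLe p t = (Finset.univ.filter fun k => p (σ k) ≤ t).card := by
      unfold FDX.countLe
      rw [← Finset.card_map σ.symm.toEmbedding]
      congr 1
      ext k
      simp [Finset.mem_map]
    rw [hcard]
    constructor
    · intro h
      by_contra hgt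
      push_neg at hgt
      have hsub : (Finset.univ.filter fun k => p (σ k) ≤ t) ⊆
          (Finset.univ.filter fun k : Fin m => (k:ℕ) < ℓ' - 1) := by
        intro k hk
        simp only [Finset.mem_filter, Finset.mem_univ, true_and] at hk ⊢
        by_contra hge
        push_neg at hge
        have hle : (⟨ℓ' - 1, by omega⟩ : Fin m) ≤ k := by simpa [Fin.le_def] using hge
        exact absurd (le_trans (hσ hle) hk) (not_le.mpr hgt)
      have hcards := Finset.card_le_card hsub
      rw [aux_cardlt m (ℓ' - 1) (by omega)] at hcards
      omega
    · intro h
      calc ℓ' = (Finset.univ.filter fun k : Fin m => (k:ℕ) < ℓ').card :=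
            (aux_cardlt m ℓ' h2).symm
        _ ≤ _ := by
            apply Finset.card_le_card
            intro k hk
            simp only [Finset.mem_filter, Finset.mem_univ, true_and] at hk ⊢
            have hle : k ≤ (⟨ℓ' - 1, by omega⟩ : Fin m) := by
              simp [Fin.le_def]; omega
            exact le_trans (hσ hle) h
  set L := FDX.sdIndex p τ with hLdef
  have hLle : L ≤ m := by
    rw [hLdef]; unfold FDX.sdIndex
    exact @Nat.findGreatest_le _ (Classical.decPred _) m
  have hPL : ∀ ℓ', 1 ≤ ℓ' → ℓ' ≤ L → ℓ' ≤ FDX.countLe p (τ ℓ') := by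
    rw [hLdef]
    unfold FDX.sdIndex
    have hP0 : ∀ ℓ', 1 ≤ ℓ' → ℓ' ≤ 0 → ℓ' ≤ FDX.countLe p (τ ℓ') := by omega
    exact @Nat.findGreatest_spec 0 (fun ℓ => ∀ ℓ', 1 ≤ ℓ' → ℓ' ≤ ℓ → ℓ' ≤ FDX.countLe p (τ ℓ')) (Classical.decPred _) m (Nat.zero_le m) hP0
  have hLge : ∀ c, c ≤ m → (∀ ℓ', 1 ≤ ℓ' → ℓ' ≤ c → ℓ' ≤ FDX.countLe p (τ ℓ')) → c ≤ L := by
    intro c hc hPc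
    rw [hLdef]
    unfold FDX.sdIndex
    exact @Nat.le_findGreatest c _ (Classical.decPred _) m hc hPc
  have hPL' : ∀ (ℓ' : ℕ) (h1 : 1 ≤ ℓ') (h2 : ℓ' ≤ L), p (σ ⟨ℓ' - 1, by omega⟩) ≤ τ ℓ' :=
    fun ℓ' h1 h2 => (hcount ℓ' h1 (le_trans h2 hLle) _).mp (hPL ℓ' h1 h2)
  ext i
  rw [FDX.sdReject, ← hLdef]
  simp only [Finset.mem_filter, Finset.mem_univ, true_and]
  constructor
  · intro hi
    split_ifs at hi with h0
    · simp at hi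
    · simp only [Finset.mem_filter, Finset.mem_univ, true_and] at hi
      have hL1 : 1 ≤ L := Nat.one_le_iff_ne_zero.mpr h0
      apply Finset.sup'_le
      intro k hk
      simp only [Finset.mem_filter, Finset.mem_univ, true_and] at hk
      rcases le_or_gt ((k:ℕ) + 1) L with hcase | hcase
      · have hkey := hPL' ((k:ℕ) + 1) (by omega) hcase
        have hk' : p (σ k) ≤ τ ((k:ℕ) + 1) := by
          have : (⟨(k:ℕ) + 1 - 1, by omega⟩ : Fin m) = k := by
            apply Fin.ext; simp
          rwa [this] at hkey
        exact (hiff ((k:ℕ) + 1) (by omega) (by omega) _ (hp _)).mp hk'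
      · have hstep1 : ξ ((k:ℕ) + 1) (p (σ k)) ≤ ξ L (p (σ k)) :=
          hξanti L ((k:ℕ) + 1) hL1 (by omega) (by omega) _ (hpIcc _)
        have hstep2 : ξ L (p (σ k)) ≤ ξ L (τ L) :=
          hξmono L (Finset.mem_Icc.mpr ⟨hL1, hLle⟩) (hpIcc _) (hτIcc L hL1 hLle)
            (le_trans hk hi)
        exact le_trans hstep1 (le_trans hstep2 (hτmem L hL1 hLle).2)
  · intro hsup
    set c := FDX.countLe p (p i) with hcdef
    have hci : ((σ.symm i : ℕ)) + 1 ≤ c := by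
      rw [hcdef]
      refine (hcount _ (by omega) (by omega) _).mpr ?_
      have : (⟨(σ.symm i : ℕ) + 1 - 1, by omega⟩ : Fin m) = σ.symm i := by
        apply Fin.ext; simp
      rw [this]
      simp
    have hc1 : 1 ≤ c := by omega
    have hcm : c ≤ m := by
      rw [hcdef]
      unfold FDX.countLe
      calc (Finset.univ.filter fun j => p j ≤ p i).card ≤ (Finset.univ : Finset (Fin m)).card :=
            Finset.card_le_card (Finset.filter_subset _ _)
        _ = m := by simp
    have hSle : ∀ k : Fin m, p (σ k) ≤ p i → ξ ((k:ℕ) + 1) (p (σ k)) ≤ ζ := by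
      intro k hk
      have hkmem : k ∈ Finset.univ.filter (fun k : Fin m => p (σ k) ≤ p i) :=
        Finset.mem_filter.mpr ⟨Finset.mem_univ _, hk⟩
      exact le_trans (Finset.le_sup' (fun k : Fin m => ξ ((k:ℕ) + 1) (p (σ k))) hkmem) hsup
    have hcL : c ≤ L := by
      apply hLge c hcm
      intro ℓ' h1 h2
      have hmem' : p (σ ⟨ℓ' - 1, by omega⟩) ≤ p i :=
        (hcount ℓ' h1 (by omega) (p i)).mp (by rw [← hcdef]; omega)
      have hξle := hSle ⟨ℓ' - 1, by omega⟩ hmem'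
      have hξle2 : ξ (ℓ' - 1 + 1) (p (σ ⟨ℓ' - 1, by omega⟩)) ≤ ζ := hξle
      rw [Nat.sub_add_cancel h1] at hξle2
      exact (hcount ℓ' h1 (by omega) _).mpr ((hiff ℓ' h1 (by omega) _ (hp _)).mpr hξle2)
    have hL1 : 1 ≤ L := le_trans hc1 hcL
    rw [if_neg (by omega)]
    simp only [Finset.mem_filter, Finset.mem_univ, true_and]
    have h1 : p i ≤ p (σ ⟨c - 1, by omega⟩) := by
      have hle : σ.symm i ≤ (⟨c - 1, by omega⟩ : Fin m) := by
        simp [Fin.le_def]; omega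
      have := hσ hle
      simpa using this
    have h2 : p (σ ⟨c - 1, by omega⟩) ≤ τ c := hPL' c hc1 hcL
    exact le_trans h1 (le_trans h2 (hτmono c L hc1 hcL hLle))
end
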